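/- arXiv:2406.01890 — 6 statements merged into one kernel-verified Lean document; each statement's English description precedes it below -/
import Mathlib

section
/- Let s ≥ 4 be an integer. Every connected graph G containing no induced K_{1,s} and no induced T_3 satisfies def(G) ≤ s − 2, and every connected graph G containing no induced K_{1,s} and no induced P_4 satisfies def(G) ≤ s − 2. -/
open SimpleGraph

/-- The deficiency of a finite graph: number of vertices missed by a maximum matching,
i.e. `|V(G)| - 2ν(G)`. -/
noncomputable def deficiency {V : Type*} [Fintype V] (G : SimpleGraph V) : ℕ :=
  Fintype.card V - sSup {k : ℕ | ∃ M : G.Subgraph, M.IsMatching ∧ M.verts.ncard = k}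

/-- The star `K_{1,n}`. -/
def starGraph (n : ℕ) : SimpleGraph (Unit ⊕ Fin n) := completeBipartiteGraph Unit (Fin n)

/-- `T n`: the graph obtained by attaching two copies of `P₂` at one end of a path `Pₙ`
(the vertices of the path are `Sum.inl 0, …, Sum.inl (n-1)`; the branch vertex is
`Sum.inl (n-1)` and the end of `T n` is `Sum.inl 0`). -/
def Tgraph (n : ℕ) : SimpleGraph (Fin n ⊕ Fin 2) :=
  SimpleGraph.fromRel (fun a b =>
    match a, b with
    | Sum.inl i, Sum.inl j => (i : ℕ) + 1 = (j : ℕ)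
    | Sum.inl i, Sum.inr _ => (i : ℕ) = n - 1
    | _, _ => False)

/-- The end vertex of (a copy of) `T p`. -/
def isTEnd {p : ℕ} : Fin p ⊕ Fin 2 → Prop
  | Sum.inl i => (i : ℕ) = 0
  | Sum.inr _ => False

/-- `K̃ₙᵖ`: the graph obtained by attaching a copy of `T p` at each vertex of the
complete graph `Kₙ`, identifying each vertex of `Kₙ` with the end of its copy of `T p`. -/
def Ktilde (n p : ℕ) : SimpleGraph (Fin n × (Fin p ⊕ Fin 2)) :=
  SimpleGraph.fromRel (fun a b =>
    (a.1 = b.1 ∧ (Tgraph p).Adj a.2 b.2) ∨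
    (a.1 ≠ b.1 ∧ isTEnd a.2 ∧ isTEnd b.2))

/-- `Fₙ¹`: the path `P_{2n+1}` with a pendant vertex attached at its center. -/
def F1 (n : ℕ) : SimpleGraph (Fin (2 * n + 1) ⊕ Unit) :=
  SimpleGraph.fromRel (fun a b =>
    match a, b with
    | Sum.inl i, Sum.inl j => (i : ℕ) + 1 = (j : ℕ)
    | Sum.inl i, Sum.inr _ => (i : ℕ) = n
    | _, _ => False)

/-- `Fₙ²`: the triangle `K₃` with a copy of `Pₙ` attached at each vertex
(the triangle vertices are `(i, 0)`). -/
def F2 (n : ℕ) : SimpleGraph (Fin 3 × Fin n) :=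
  SimpleGraph.fromRel (fun a b =>
    (a.1 = b.1 ∧ (a.2 : ℕ) + 1 = (b.2 : ℕ)) ∨
    (a.1 ≠ b.1 ∧ (a.2 : ℕ) = 0 ∧ (b.2 : ℕ) = 0))

/-- `Fₙ³`: the cycle `C₄` with a copy of `Pₙ` attached at each of two nonadjacent
vertices. The two paths are `(k, 0), …, (k, n-1)` for `k : Fin 2`; the two other cycle
vertices are `Sum.inr 0` and `Sum.inr 1`, each adjacent to `(0,0)` and `(1,0)`. -/
def F3 (n : ℕ) : SimpleGraph ((Fin 2 × Fin n) ⊕ Fin 2) :=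
  SimpleGraph.fromRel (fun a b =>
    match a, b with
    | Sum.inl (k, i), Sum.inl (k', i') => k = k' ∧ (i : ℕ) + 1 = (i' : ℕ)
    | Sum.inl (_, i), Sum.inr _ => (i : ℕ) = 0
    | _, _ => False)

/-- `Fₙ⁴`: `Fₙ³` together with the edge joining its two vertices of degree 3. -/
def F4 (n : ℕ) : SimpleGraph ((Fin 2 × Fin n) ⊕ Fin 2) :=
  SimpleGraph.fromRel (fun a b =>
    match a, b with
    | Sum.inl (k, i), Sum.inl (k', i') =>
        (k = k' ∧ (i : ℕ) + 1 = (i' : ℕ)) ∨ (k ≠ k' ∧ (i : ℕ) = 0 ∧ (i' : ℕ) = 0)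
    | Sum.inl (_, i), Sum.inr _ => (i : ℕ) = 0
    | _, _ => False)

/-- `F̃ₙᵖ`: the triangle `K₃` with a copy of `T p` attached (by its end) at one vertex and
a copy of `Pₙ` attached at each of the other two vertices. -/
def Ftilde (n p : ℕ) : SimpleGraph ((Fin p ⊕ Fin 2) ⊕ (Fin 2 × Fin n)) :=
  SimpleGraph.fromRel (fun a b =>
    match a, b with
    | Sum.inl x, Sum.inl y => (Tgraph p).Adj x y
    | Sum.inl x, Sum.inr (_, i) => isTEnd x ∧ (i : ℕ) = 0
    | Sum.inr (k, i), Sum.inr (k', i') =>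
        (k = k' ∧ (i : ℕ) + 1 = (i' : ℕ)) ∨ (k ≠ k' ∧ (i : ℕ) = 0 ∧ (i' : ℕ) = 0)
    | _, _ => False)

/-- `Bᵢ`: the graph obtained by attaching two copies of `P₂` at the end of `T_{i+2}`. -/
def Bgraph (i : ℕ) : SimpleGraph ((Fin (i + 2) ⊕ Fin 2) ⊕ Fin 2) :=
  SimpleGraph.fromRel (fun a b =>
    match a, b with
    | Sum.inl x, Sum.inl y => (Tgraph (i + 2)).Adj x y
    | Sum.inl x, Sum.inr _ => isTEnd x
    | _, _ => False)

/-- `H¹_{s,t}`: the union of `s+1` disjoint paths `Qᵢ` on `t` vertices (vertices `(i, j)`)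
together with new vertices `vᵢ = (i, 0)` and `wᵢ = (i, 1)` (for `i : Fin s`) and the edges
`vᵢwᵢ`, `vᵢ uᵢᵗ`, `vᵢ u_{i+1}¹`. -/
def H1graph (s t : ℕ) : SimpleGraph ((Fin (s + 1) × Fin t) ⊕ (Fin s × Fin 2)) :=
  SimpleGraph.fromRel (fun a b =>
    match a, b with
    | Sum.inl (i, j), Sum.inl (i', j') => i = i' ∧ (j : ℕ) + 1 = (j' : ℕ)
    | Sum.inl (i, j), Sum.inr (k, l) =>
        (l : ℕ) = 0 ∧ (((i : ℕ) = (k : ℕ) ∧ (j : ℕ) = t - 1) ∨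
          ((i : ℕ) = (k : ℕ) + 1 ∧ (j : ℕ) = 0))
    | Sum.inr (k, l), Sum.inr (k', l') => k = k' ∧ l ≠ l'
    | _, _ => False)

/-- `H³_{s,t}`: the union of `s+1` disjoint paths `Qᵢ` on `t` vertices together with new
vertices `vᵢ, wᵢ` (`i : Fin s`), `x = Sum.inr (Sum.inr 0)`, `y = Sum.inr (Sum.inr 1)`, and
the edges `x u₁¹`, `u_{s+1}ᵗ y`, and `vᵢ uᵢᵗ`, `vᵢ u_{i+1}¹`, `wᵢ uᵢᵗ`, `wᵢ u_{i+1}¹`. -/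
def H3graph (s t : ℕ) :
    SimpleGraph ((Fin (s + 1) × Fin t) ⊕ ((Fin s × Fin 2) ⊕ Fin 2)) :=
  SimpleGraph.fromRel (fun a b =>
    match a, b with
    | Sum.inl (i, j), Sum.inl (i', j') => i = i' ∧ (j : ℕ) + 1 = (j' : ℕ)
    | Sum.inl (i, j), Sum.inr (Sum.inl (k, _)) =>
        ((i : ℕ) = (k : ℕ) ∧ (j : ℕ) = t - 1) ∨ ((i : ℕ) = (k : ℕ) + 1 ∧ (j : ℕ) = 0)
    | Sum.inl (i, j), Sum.inr (Sum.inr m) =>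
        ((m : ℕ) = 0 ∧ (i : ℕ) = 0 ∧ (j : ℕ) = 0) ∨
          ((m : ℕ) = 1 ∧ (i : ℕ) = s ∧ (j : ℕ) = t - 1)
    | _, _ => False)

/-- `H⁴_{s,t}`: `H³_{s,t}` together with the edges `uᵢᵗ u_{i+1}¹` for `i ∈ [s]`. -/
def H4graph (s t : ℕ) :
    SimpleGraph ((Fin (s + 1) × Fin t) ⊕ ((Fin s × Fin 2) ⊕ Fin 2)) :=
  SimpleGraph.fromRel (fun a b =>
    match a, b with
    | Sum.inl (i, j), Sum.inl (i', j') =>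
        (i = i' ∧ (j : ℕ) + 1 = (j' : ℕ)) ∨
          ((i : ℕ) + 1 = (i' : ℕ) ∧ (j : ℕ) = t - 1 ∧ (j' : ℕ) = 0)
    | Sum.inl (i, j), Sum.inr (Sum.inl (k, _)) =>
        ((i : ℕ) = (k : ℕ) ∧ (j : ℕ) = t - 1) ∨ ((i : ℕ) = (k : ℕ) + 1 ∧ (j : ℕ) = 0)
    | Sum.inl (i, j), Sum.inr (Sum.inr m) =>
        ((m : ℕ) = 0 ∧ (i : ℕ) = 0 ∧ (j : ℕ) = 0) ∨
          ((m : ℕ) = 1 ∧ (i : ℕ) = s ∧ (j : ℕ) = t - 1)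
    | _, _ => False)

/-- `H̃ᵖ_{s,t}`: the union of `s+1` disjoint paths `Qᵢ` on `t` vertices and `s` disjoint
copies `Rᵢ` of `T p` with ends `vᵢ = (i, end)`, together with the edges
`uᵢᵗ u_{i+1}¹`, `uᵢᵗ vᵢ`, `u_{i+1}¹ vᵢ` for `i ∈ [s]`. -/
def Htilde (s t p : ℕ) :
    SimpleGraph ((Fin (s + 1) × Fin t) ⊕ (Fin s × (Fin p ⊕ Fin 2))) :=
  SimpleGraph.fromRel (fun a b =>
    match a, b with
    | Sum.inl (i, j), Sum.inl (i', j') =>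
        (i = i' ∧ (j : ℕ) + 1 = (j' : ℕ)) ∨
          ((i : ℕ) + 1 = (i' : ℕ) ∧ (j : ℕ) = t - 1 ∧ (j' : ℕ) = 0)
    | Sum.inl (i, j), Sum.inr (k, x) =>
        isTEnd x ∧ (((i : ℕ) = (k : ℕ) ∧ (j : ℕ) = t - 1) ∨
          ((i : ℕ) = (k : ℕ) + 1 ∧ (j : ℕ) = 0))
    | Sum.inr (k, x), Sum.inr (k', y) => k = k' ∧ (Tgraph p).Adj x y
    | _, _ => False)

/-- A finite graph, encoded as a simple graph on some `Fin n`. -/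
abbrev GraphFam := Set (Σ n : ℕ, SimpleGraph (Fin n))

/-- `Below 𝓗 G` means that some member of the family `𝓗` is (isomorphic to) an induced
subgraph of `G`; so `𝓗 ≤ 𝓗₂` iff `Below 𝓗 G` holds for every `G ∈ 𝓗₂`. -/
def Below (𝓗 : GraphFam) {W : Type*} (G : SimpleGraph W) : Prop :=
  ∃ H ∈ 𝓗, Nonempty (H.2 ↪g G)

/-- The relation `𝓗₁ ≤ 𝓗₂` between families of graphs: every member of `𝓗₂` contains an
induced subgraph isomorphic to some member of `𝓗₁`. -/
def FamLE (𝓗₁ 𝓗₂ : GraphFam) : Prop :=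
  ∀ H ∈ 𝓗₂, Below 𝓗₁ H.2

/-- The induced matching number `ν'(G)`. -/
noncomputable def indMatchNum {V : Type*} [Fintype V] (G : SimpleGraph V) : ℕ :=
  sSup {k : ℕ | ∃ M : G.Subgraph, M.IsInduced ∧ M.IsMatching ∧ M.verts.ncard = 2 * k}

/-!
Suppose `def G ≥ s - 1 ≥ 2`. If `u` is exposed by a maximum matching `M`, `ux ∈ G` and
`xy ∈ M`, then exchanging `xy` for `ux` gives another maximum matching, which exposes `y`
instead of `u`. In a chair-free graph such a rotation can move a hole (exposed vertex) at
distance `≥ 3` from a vertex `t` closer to `t`: otherwise a shortest path `u x₁ x₂ x₃`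
towards `t`, together with the partner of `x₁`, induces a chair. Shrinking the distance
between two holes this way yields a vertex with two exposed neighbours. Now choose `M` and
`a` so that `a` has as many exposed neighbours as possible, and then the holes are as close
to `a` as possible. Every hole is then adjacent to `a`: one at distance `≥ 3` could be
rotated closer, and one at distance `2` yields a chair, an augmenting path, or a vertex with
more exposed neighbours than `a`. The partner `a'` of `a` has no exposed neighbour, since
there is no augmenting path, so `a`, `a'` and the `≥ s - 1` holes induce `K_{1,s}`.
Finally, `P₄` is an induced subgraph of `T₃`.
-/

theorem nonempty_pathGraph_embedding_tgraph (n : ℕ) :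
    Nonempty (pathGraph (n + 1) ↪g Tgraph n) := by
  let f : Fin (n + 1) → Fin n ⊕ Fin 2 := fun i =>
    if h : (i : ℕ) < n then .inl ⟨i, h⟩ else .inr 0
  refine ⟨⟨⟨f, fun i j hij => ?_⟩, fun {i j} => ?_⟩⟩
  · simp only [f] at hij
    split_ifs at hij with hi hj hj <;> simp_all [Fin.ext_iff]
    omega
  · change (Tgraph n).Adj (f i) (f j) ↔ _
    simp only [f, pathGraph_adj, Tgraph, fromRel_adj]
    split_ifs with hi hj hj <;> simp [Fin.ext_iff] <;> omega

section Embeddings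

variable {V : Type*} {G : SimpleGraph V}

/-- `q₂ q₁ c` is the path of the chair and `p₁, p₂` are the two pendant vertices at `c`. -/
theorem nonempty_tgraph3_embedding {c p₁ p₂ q₁ q₂ : V}
    (hp₁ : G.Adj c p₁) (hp₂ : G.Adj c p₂) (hq₁ : G.Adj c q₁) (hq₂ : G.Adj q₁ q₂)
    (hp₁p₂ : ¬ G.Adj p₁ p₂) (hp₁q₁ : ¬ G.Adj p₁ q₁) (hp₂q₁ : ¬ G.Adj p₂ q₁)
    (hcq₂ : ¬ G.Adj c q₂) (hp₁q₂ : ¬ G.Adj p₁ q₂) (hp₂q₂ : ¬ G.Adj p₂ q₂) (hne : p₁ ≠ p₂) :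
    Nonempty (Tgraph 3 ↪g G) := by
  have := hp₁.ne; have := hp₂.ne; have := hq₁.ne; have := hq₂.ne
  have : p₁ ≠ q₁ := by rintro rfl; exact hp₁q₂ hq₂
  have : p₂ ≠ q₁ := by rintro rfl; exact hp₂q₂ hq₂
  have : c ≠ q₂ := by rintro rfl; exact hp₁q₂ hp₁.symm
  have : p₁ ≠ q₂ := by rintro rfl; exact hcq₂ hp₁
  have : p₂ ≠ q₂ := by rintro rfl; exact hcq₂ hp₂
  refine ⟨⟨⟨Sum.elim ![q₂, q₁, c] ![p₁, p₂], ?_⟩, ?_⟩⟩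
  · intro x y hxy
    rcases x with i | i <;> rcases y with j | j <;> fin_cases i <;> fin_cases j <;>
      simp_all
  · intro x y
    change G.Adj (Sum.elim ![q₂, q₁, c] ![p₁, p₂] x) (Sum.elim ![q₂, q₁, c] ![p₁, p₂] y) ↔ _
    rcases x with i | i <;> rcases y with j | j <;> fin_cases i <;> fin_cases j <;>
      simp [Tgraph, fromRel_adj, G.adj_comm, *]

theorem nonempty_starGraph_embedding [Finite V] {s : ℕ} {c : V} {I : Set V}
    (hI : G.IsIndepSet I) (hcI : I ⊆ G.neighborSet c) (hs : s ≤ I.ncard) :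
    Nonempty (_root_.starGraph s ↪g G) := by
  have := Fintype.ofFinite I
  obtain ⟨f⟩ := Function.Embedding.nonempty_of_card_le (α := Fin s) (β := I)
    (by rwa [Fintype.card_fin, ← Nat.card_eq_fintype_card, Nat.card_coe_set_eq])
  have hadj (i : Fin s) : G.Adj c (f i) := hcI (f i).2
  refine ⟨⟨⟨Sum.elim (fun _ => c) (fun i => f i), ?_⟩, ?_⟩⟩
  · rintro (⟨⟩ | i) (⟨⟩ | j) h
    · rfl
    · exact absurd h (hadj j).ne
    · exact absurd h (hadj i).ne.symm
    · exact congrArg Sum.inr (f.injective (Subtype.ext h))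
  · intro x y
    change G.Adj (Sum.elim (fun _ => c) (fun i => (f i : V)) x)
      (Sum.elim (fun _ => c) (fun i => (f i : V)) y) ↔ _
    rcases x with ⟨⟩ | i <;> rcases y with ⟨⟩ | j <;>
      simp only [_root_.starGraph, completeBipartiteGraph_adj, Sum.elim_inl, Sum.elim_inr]
    · simp
    · simpa using hadj j
    · simpa using (hadj i).symm
    · simpa using fun h : G.Adj (f i) (f j) => hI (f i).2 (f j).2 h.ne h

end Embeddings

namespace SimpleGraph

variable {V : Type*} {G : SimpleGraph V}

theorem Adj.dist_le_dist_add_one {x y : V} (h : G.Adj x y) (t : V) :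
    G.dist x t ≤ G.dist y t + 1 := by
  rw [G.dist_comm, G.dist_comm (u := y)]
  rcases h.symm.diff_dist_adj (u := t) with h | h | h <;> omega

theorem not_adj_of_dist_add_two_le {x y t : V} (h : G.dist y t + 2 ≤ G.dist x t) :
    ¬ G.Adj x y :=
  fun hxy => by have := hxy.dist_le_dist_add_one t; omega

theorem exists_adj_dist_eq_of_dist_eq_add_one {u t : V} {r : ℕ} (h : G.dist u t = r + 1) :
    ∃ z, G.Adj u z ∧ G.dist z t = r := by
  obtain ⟨p, hp⟩ := exists_walk_of_dist_ne_zero (by omega : G.dist u t ≠ 0)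
  cases p with
  | nil => simp at h
  | cons huz q =>
    refine ⟨_, huz, le_antisymm ?_ ?_⟩
    · have := dist_le q
      simp only [Walk.length_cons] at hp
      omega
    · have := huz.dist_le_dist_add_one t
      omega

namespace Subgraph

variable {M : G.Subgraph} {u v x y : V}

def IsMaximumMatching (M : G.Subgraph) : Prop :=
  M.IsMatching ∧ ∀ N : G.Subgraph, N.IsMatching → N.verts.ncard ≤ M.verts.ncard

theorem IsMatching.sup_subgraphOfAdj (hM : M.IsMatching) (huv : G.Adj u v)
    (hu : u ∉ M.verts) (hv : v ∉ M.verts) : (M ⊔ G.subgraphOfAdj huv).IsMatching := by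
  refine hM.sup (.subgraphOfAdj huv) ?_
  rw [hM.support_eq_verts, (IsMatching.subgraphOfAdj huv).support_eq_verts,
    subgraphOfAdj_verts, Set.disjoint_insert_right, Set.disjoint_singleton_right]
  exact ⟨hu, hv⟩

theorem IsMatching.deleteVerts_pair (hM : M.IsMatching) (hxy : M.Adj x y) :
    (M.deleteVerts {x, y}).IsMatching := by
  rintro v ⟨hv, hvxy⟩
  obtain ⟨w, hvw, huniq⟩ := hM hv
  have hwxy : w ∉ ({x, y} : Set V) := by
    rintro (rfl | rfl)
    · exact hvxy (.inr (hM.eq_of_adj_left hvw.symm hxy))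
    · exact hvxy (.inl (hM.eq_of_adj_right hvw hxy))
  exact ⟨w, deleteVerts_adj.mpr ⟨hv, hvxy, hvw.snd_mem, hwxy, hvw⟩,
    fun w' hw' => huniq w' (deleteVerts_adj.mp hw').2.2.2.2⟩

/-- For `u` exposed and `xy ∈ M`: the matching `M - xy + ux`, which exposes `y` instead. -/
def rotate (M : G.Subgraph) (hux : G.Adj u x) (y : V) : G.Subgraph :=
  M.deleteVerts {x, y} ⊔ G.subgraphOfAdj hux

theorem IsMatching.rotate (hM : M.IsMatching) (hu : u ∉ M.verts) (hux : G.Adj u x)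
    (hxy : M.Adj x y) : (M.rotate hux y).IsMatching := by
  refine (hM.deleteVerts_pair hxy).sup (.subgraphOfAdj hux) ?_
  rw [(hM.deleteVerts_pair hxy).support_eq_verts,
    (IsMatching.subgraphOfAdj hux).support_eq_verts, subgraphOfAdj_verts,
    Set.disjoint_insert_right, Set.disjoint_singleton_right, deleteVerts_verts]
  exact ⟨fun h => hu h.1, fun h => h.2 (.inl rfl)⟩

theorem rotate_verts (hux : G.Adj u x) (hxy : M.Adj x y) :
    (M.rotate hux y).verts = insert u (M.verts \ {y}) := by
  ext v
  simp only [Subgraph.rotate, verts_sup, deleteVerts_verts, subgraphOfAdj_verts,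
    Set.mem_union, Set.mem_sdiff, Set.mem_insert_iff, Set.mem_singleton_iff]
  constructor
  · rintro (⟨hv, hvxy⟩ | rfl | rfl)
    · exact .inr ⟨hv, fun h => hvxy (.inr h)⟩
    · exact .inl rfl
    · exact .inr ⟨hxy.fst_mem, hxy.ne⟩
  · rintro (rfl | ⟨hv, hvy⟩)
    · exact .inr (.inl rfl)
    · by_cases hvx : v = x
      · exact .inr (.inr hvx)
      · exact .inl ⟨hv, by tauto⟩

theorem notMem_rotate_verts_self (hu : u ∉ M.verts) (hux : G.Adj u x) (hxy : M.Adj x y) :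
    y ∉ (M.rotate hux y).verts := by
  rw [rotate_verts hux hxy]
  rintro (rfl | ⟨-, h⟩)
  · exact hu hxy.snd_mem
  · exact h rfl

theorem notMem_rotate_verts (hux : G.Adj u x) (hxy : M.Adj x y) (hv : v ∉ M.verts)
    (hvu : v ≠ u) : v ∉ (M.rotate hux y).verts := by
  rw [rotate_verts hux hxy]
  rintro (h | ⟨h, -⟩)
  · exact hvu h
  · exact hv h

theorem IsMatching.rotate_adj (hM : M.IsMatching) (hux : G.Adj u x) (hxy : M.Adj x y)
    {p q : V} (hpq : M.Adj p q) (hpx : p ≠ x) (hpy : p ≠ y) : (M.rotate hux y).Adj p q := by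
  have hqx : q ≠ x := fun h => hpy (hM.eq_of_adj_right (h ▸ hpq) hxy.symm)
  have hqy : q ≠ y := fun h => hpx (hM.eq_of_adj_right (h ▸ hpq) hxy)
  refine Or.inl (deleteVerts_adj.mpr ⟨hpq.fst_mem, ?_, hpq.snd_mem, ?_, hpq⟩) <;>
    simp [*]

theorem neighborSet_sdiff_verts_subset_rotate {a : V} (hux : G.Adj u x) (hxy : M.Adj x y)
    (hau : ¬ G.Adj a u) :
    G.neighborSet a \ M.verts ⊆ G.neighborSet a \ (M.rotate hux y).verts :=
  fun v ⟨hav, hv⟩ => ⟨hav, notMem_rotate_verts hux hxy hv (by rintro rfl; exact hau hav)⟩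

theorem finsum_mem_rotate_verts_compl [Finite V] {β : Type*} [AddCommMonoid β]
    (hu : u ∉ M.verts) (hux : G.Adj u x) (hxy : M.Adj x y) (f : V → β) :
    ∑ᶠ v ∈ (M.rotate hux y).vertsᶜ, f v + f u = ∑ᶠ v ∈ M.vertsᶜ, f v + f y := by
  have hcompl : (M.rotate hux y).vertsᶜ = insert y (M.vertsᶜ \ {u}) := by
    ext v
    rw [rotate_verts hux hxy]
    by_cases hvy : v = y
    · subst hvy; simp [hxy.snd_mem, (hxy.snd_mem.ne_of_notMem hu)]
    · simp [hvy, and_comm]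
  have hy : y ∉ M.vertsᶜ \ {u} := fun h => h.1 hxy.snd_mem
  have hu' : u ∉ M.vertsᶜ \ {u} := fun h => h.2 rfl
  have hsplit : ∑ᶠ v ∈ M.vertsᶜ, f v = f u + ∑ᶠ v ∈ M.vertsᶜ \ {u}, f v := by
    rw [← finsum_mem_insert f hu' (Set.toFinite _), Set.insert_sdiff_singleton,
      Set.insert_eq_of_mem (show u ∈ M.vertsᶜ from hu)]
  rw [hcompl, finsum_mem_insert f hy (Set.toFinite _), hsplit]
  abel

theorem IsMaximumMatching.rotate (hM : M.IsMaximumMatching) (hu : u ∉ M.verts)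
    (hux : G.Adj u x) (hxy : M.Adj x y) : (M.rotate hux y).IsMaximumMatching := by
  refine ⟨hM.1.rotate hu hux hxy, fun N hN => ?_⟩
  rw [rotate_verts hux hxy, Set.ncard_exchange hu hxy.snd_mem]
  exact hM.2 N hN

theorem IsMaximumMatching.deficiency_eq [Fintype V] (hM : M.IsMaximumMatching) :
    deficiency G = M.vertsᶜ.ncard := by
  have hsup : sSup {k | ∃ N : G.Subgraph, N.IsMatching ∧ N.verts.ncard = k} = M.verts.ncard :=
    IsGreatest.csSup_eq ⟨⟨M, hM.1, rfl⟩, by rintro _ ⟨N, hN, rfl⟩; exact hM.2 N hN⟩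
  rw [deficiency, hsup, Set.ncard_compl, Nat.card_eq_fintype_card]

section Finite

variable [Finite V]

theorem IsMaximumMatching.not_adj (hM : M.IsMaximumMatching) (hu : u ∉ M.verts)
    (hv : v ∉ M.verts) : ¬ G.Adj u v := by
  intro huv
  have hlt : M.verts.ncard < (M ⊔ G.subgraphOfAdj huv).verts.ncard := by
    refine Set.ncard_lt_ncard ⟨le_sup_left (a := M).1, fun h => hu (h ?_)⟩
    simp
  exact (hM.2 _ (hM.1.sup_subgraphOfAdj huv hu hv)).not_gt hlt

theorem IsMaximumMatching.mem_verts_of_adj (hM : M.IsMaximumMatching) {a : V}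
    (hu : u ∉ M.verts) (hau : G.Adj a u) : a ∈ M.verts := by
  by_contra ha
  exact hM.not_adj ha hu hau

theorem IsMaximumMatching.not_adj_of_alternating_path3 (hM : M.IsMaximumMatching)
    {u u' a a' : V} (hu : u ∉ M.verts) (hu' : u' ∉ M.verts) (huu' : u ≠ u')
    (hua : G.Adj u a) (haa' : M.Adj a a') : ¬ G.Adj a' u' :=
  (hM.rotate hu hua haa').not_adj (notMem_rotate_verts_self hu hua haa')
    (notMem_rotate_verts hua haa' hu' huu'.symm)

theorem IsMaximumMatching.not_adj_of_alternating_path5 (hM : M.IsMaximumMatching)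
    {u u' a a' w w' : V} (hu : u ∉ M.verts) (hu' : u' ∉ M.verts) (huu' : u ≠ u')
    (hua : G.Adj u a) (haa' : M.Adj a a') (ha'w : G.Adj a' w) (hww' : M.Adj w w')
    (hwa : w ≠ a) (hwa' : w ≠ a') : ¬ G.Adj w' u' :=
  (hM.rotate hu hua haa').not_adj_of_alternating_path3
    (notMem_rotate_verts_self hu hua haa') (notMem_rotate_verts hua haa' hu' huu'.symm)
    (fun h => hu' (h ▸ haa'.snd_mem)) ha'w (hM.1.rotate_adj hua haa' hww' hwa hwa')

theorem IsMaximumMatching.not_adj_partner (hM : M.IsMaximumMatching) {a a' : V}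
    (hA : 2 ≤ (G.neighborSet a \ M.verts).ncard) (haa' : M.Adj a a') (hv : v ∉ M.verts) :
    ¬ G.Adj a' v := by
  obtain ⟨u, ⟨hau, hu⟩, huv⟩ := Set.exists_ne_of_one_lt_ncard hA v
  exact hM.not_adj_of_alternating_path3 hu hv huv hau.symm haa'

theorem IsMaximumMatching.exists_rotation_dist_lt (hT : ¬ Nonempty (Tgraph 3 ↪g G))
    (hM : M.IsMaximumMatching) {t : V} (hu : u ∉ M.verts) (h3 : 3 ≤ G.dist u t) :
    ∃ x y, G.Adj u x ∧ M.Adj x y ∧ G.dist y t < G.dist u t := by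
  obtain ⟨x₁, hux₁, hd₁⟩ := exists_adj_dist_eq_of_dist_eq_add_one
    (show G.dist u t = (G.dist u t - 1) + 1 by omega)
  obtain ⟨x₂, hx₁₂, hd₂⟩ := exists_adj_dist_eq_of_dist_eq_add_one
    (show G.dist x₁ t = (G.dist u t - 2) + 1 by omega)
  obtain ⟨x₃, hx₂₃, hd₃⟩ := exists_adj_dist_eq_of_dist_eq_add_one
    (show G.dist x₂ t = (G.dist u t - 3) + 1 by omega)
  obtain ⟨x₁', hx₁x₁', -⟩ := hM.1 (hM.mem_verts_of_adj hu hux₁.symm)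
  by_cases hux₁' : G.Adj u x₁'
  · exact ⟨x₁', x₁, hux₁', hx₁x₁'.symm, by omega⟩
  by_cases hd₁' : G.dist x₁' t < G.dist u t
  · exact ⟨x₁, x₁', hux₁, hx₁x₁', hd₁'⟩
  -- otherwise `x₁` is the centre of a chair with pendant vertices `u`, `x₁'` and path `x₂ x₃`
  exact absurd (nonempty_tgraph3_embedding hux₁.symm (M.adj_sub hx₁x₁') hx₁₂ hx₂₃ hux₁'
    (not_adj_of_dist_add_two_le (t := t) (by omega))
    (not_adj_of_dist_add_two_le (t := t) (by omega))
    (not_adj_of_dist_add_two_le (t := t) (by omega))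
    (not_adj_of_dist_add_two_le (t := t) (by omega))
    (not_adj_of_dist_add_two_le (t := t) (by omega)) (fun h => hu (h ▸ hx₁x₁'.snd_mem))) hT

theorem IsMaximumMatching.exists_two_le_ncard_neighborSet_sdiff (hconn : G.Connected)
    (hT : ¬ Nonempty (Tgraph 3 ↪g G)) (hM : M.IsMaximumMatching) {u₁ u₂ : V}
    (hu₁ : u₁ ∉ M.verts) (hu₂ : u₂ ∉ M.verts) (hne : u₁ ≠ u₂) :
    ∃ (N : G.Subgraph) (a : V), N.IsMaximumMatching ∧ 2 ≤ (G.neighborSet a \ N.verts).ncard := by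
  induction hd : G.dist u₁ u₂ using Nat.strong_induction_on generalizing M u₁ with
  | _ d ih =>
  have hpos := hconn.pos_dist_of_ne hne
  have hd1 : G.dist u₁ u₂ ≠ 1 := fun h => hM.not_adj hu₁ hu₂ (dist_eq_one_iff_adj.mp h)
  by_cases hd2 : d = 2
  · obtain ⟨a, hu₁a, ha⟩ :=
      exists_adj_dist_eq_of_dist_eq_add_one (show G.dist u₁ u₂ = 1 + 1 by omega)
    exact ⟨M, a, hM, (Set.one_lt_ncard_iff).mpr
      ⟨u₁, u₂, ⟨hu₁a.symm, hu₁⟩, ⟨dist_eq_one_iff_adj.mp ha, hu₂⟩, hne⟩⟩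
  · obtain ⟨x, y, hux, hxy, hlt⟩ := hM.exists_rotation_dist_lt hT hu₁ (t := u₂) (by omega)
    exact ih _ (hd ▸ hlt) (hM.rotate hu₁ hux hxy) (notMem_rotate_verts_self hu₁ hux hxy)
      (notMem_rotate_verts hux hxy hu₂ hne.symm) (fun h => hu₂ (h ▸ hxy.snd_mem)) rfl

theorem IsMaximumMatching.exists_rotation_or_subset_of_dist_eq_two
    (hT : ¬ Nonempty (Tgraph 3 ↪g G)) (hM : M.IsMaximumMatching) {a : V}
    (hA : 2 ≤ (G.neighborSet a \ M.verts).ncard) (hu : u ∉ M.verts) (hd : G.dist u a = 2) :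
    (∃ x y, G.Adj u x ∧ M.Adj x y ∧ G.dist y a < 2) ∨
      ∃ w, G.Adj w u ∧ G.neighborSet a \ M.verts ⊆ G.neighborSet w := by
  obtain ⟨w, huw, hwa⟩ := exists_adj_dist_eq_of_dist_eq_add_one (show G.dist u a = 1 + 1 from hd)
  rw [dist_eq_one_iff_adj] at hwa
  by_cases hsub : G.neighborSet a \ M.verts ⊆ G.neighborSet w
  · exact .inr ⟨w, huw.symm, hsub⟩
  refine .inl ?_
  obtain ⟨u₀, ⟨hau₀, hu₀⟩, hwu₀⟩ := Set.not_subset.mp hsub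
  obtain ⟨u₁, ⟨hau₁, hu₁⟩, hu₁u₀⟩ := Set.exists_ne_of_one_lt_ncard hA u₀
  have hua : ¬ G.Adj u a := fun h => by simp [dist_eq_one_iff_adj.mpr h] at hd
  obtain ⟨a', haa', -⟩ := hM.1 (hM.mem_verts_of_adj hu₀ hau₀)
  have ha' {v : V} (hv : v ∉ M.verts) : ¬ G.Adj a' v := hM.not_adj_partner hA haa' hv
  obtain ⟨w', hww', -⟩ := hM.1 (hM.mem_verts_of_adj hu huw.symm)
  by_cases huw' : G.Adj u w'
  · exact ⟨w', w, huw', hww'.symm, by simp [dist_eq_one_iff_adj.mpr hwa]⟩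
  have hwa' : G.Adj w a' := by
    by_contra hwa'
    exact hT (nonempty_tgraph3_embedding hau₀ (M.adj_sub haa') hwa.symm huw.symm
      (fun h => ha' hu₀ h.symm) (fun h => hwu₀ h.symm) (fun h => hwa' h.symm) (fun h => hua h.symm)
      (hM.not_adj hu₀ hu) (ha' hu) (fun h => hu₀ (h ▸ haa'.snd_mem)))
  have hw'u₀ : ¬ G.Adj w' u₀ := hM.not_adj_of_alternating_path5 hu₁ hu₀ hu₁u₀ hau₁.symm haa'
    hwa'.symm hww' hwa.ne (by rintro rfl; exact ha' hu huw.symm)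
  have hw'a : G.Adj w' a := by
    by_contra hw'a
    exact hT (nonempty_tgraph3_embedding huw.symm (M.adj_sub hww') hwa hau₀ huw' hua hw'a hwu₀
      (hM.not_adj hu hu₀) hw'u₀ (fun h => hu (h ▸ hww'.snd_mem)))
  exact ⟨w, w', huw, hww', by simp [dist_eq_one_iff_adj.mpr hw'a]⟩

theorem IsMaximumMatching.adj_of_notMem_of_extremal (hconn : G.Connected)
    (hT : ¬ Nonempty (Tgraph 3 ↪g G)) (hM : M.IsMaximumMatching) {a : V}
    (hA : 2 ≤ (G.neighborSet a \ M.verts).ncard)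
    (hAmax : ∀ N : G.Subgraph, N.IsMaximumMatching → ∀ b,
      (G.neighborSet b \ N.verts).ncard ≤ (G.neighborSet a \ M.verts).ncard)
    (hmin : ∀ N : G.Subgraph, N.IsMaximumMatching →
      (G.neighborSet a \ M.verts).ncard ≤ (G.neighborSet a \ N.verts).ncard →
      ∑ᶠ v ∈ M.vertsᶜ, G.dist v a ≤ ∑ᶠ v ∈ N.vertsᶜ, G.dist v a)
    (hu : u ∉ M.verts) : G.Adj a u := by
  by_contra hau
  have hrot (x y : V) (hux : G.Adj u x) (hxy : M.Adj x y) : G.dist u a ≤ G.dist y a := by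
    have hle := hmin _ (hM.rotate hu hux hxy)
      (Set.ncard_le_ncard (neighborSet_sdiff_verts_subset_rotate hux hxy hau))
    have := finsum_mem_rotate_verts_compl hu hux hxy (G.dist · a)
    omega
  obtain ⟨u₀, hau₀, hu₀⟩ :=
    Set.nonempty_of_ncard_ne_zero (s := G.neighborSet a \ M.verts) (by omega)
  have hpos := hconn.pos_dist_of_ne (fun h : u = a => hu (h ▸ hM.mem_verts_of_adj hu₀ hau₀))
  have hd1 : G.dist u a ≠ 1 := fun h => hau (dist_eq_one_iff_adj.mp h).symm
  obtain hd2 | hd3 : G.dist u a = 2 ∨ 3 ≤ G.dist u a := by omega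
  · obtain ⟨x, y, hux, hxy, hlt⟩ | ⟨w, hwu, hsub⟩ :=
      hM.exists_rotation_or_subset_of_dist_eq_two hT hA hu hd2
    · have := hrot x y hux hxy
      omega
    · have hins : insert u (G.neighborSet a \ M.verts) ⊆ G.neighborSet w \ M.verts :=
        Set.insert_subset ⟨hwu, hu⟩ fun v hv => ⟨hsub hv, hv.2⟩
      have := Set.ncard_le_ncard hins
      rw [Set.ncard_insert_of_notMem (fun h => hau h.1)] at this
      have := hAmax M hM w
      omega
  · obtain ⟨x, y, hux, hxy, hlt⟩ := hM.exists_rotation_dist_lt hT hu hd3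
    have := hrot x y hux hxy
    omega

end Finite

end Subgraph

theorem exists_isMaximumMatching [Finite V] (G : SimpleGraph V) :
    ∃ M : G.Subgraph, M.IsMaximumMatching := by
  obtain ⟨M, hM, hmax⟩ := Set.exists_max_image {M : G.Subgraph | M.IsMatching}
    (fun M => M.verts.ncard) (Set.toFinite _) ⟨⊥, fun _ hv => hv.elim⟩
  exact ⟨M, hM, hmax⟩

theorem exists_isMaximumMatching_forall_adj [Finite V] (hconn : G.Connected)
    (hT : ¬ Nonempty (Tgraph 3 ↪g G)) {M₀ : G.Subgraph} (hM₀ : M₀.IsMaximumMatching)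
    (h₀ : 2 ≤ M₀.vertsᶜ.ncard) :
    ∃ (M : G.Subgraph) (a a' : V), M.IsMaximumMatching ∧ M.Adj a a' ∧
      (∀ u ∉ M.verts, G.Adj a u) ∧ ∀ u ∉ M.verts, ¬ G.Adj a' u := by
  obtain ⟨u₁, u₂, hu₁, hu₂, hne⟩ := (Set.one_lt_ncard_iff).mp h₀
  obtain ⟨M₁, a₁, hM₁, hA₁⟩ :=
    hM₀.exists_two_le_ncard_neighborSet_sdiff hconn hT hu₁ hu₂ hne
  obtain ⟨⟨M₂, a⟩, hM₂, hAmax⟩ := Set.exists_max_image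
    {p : G.Subgraph × V | p.1.IsMaximumMatching} (fun p => (G.neighborSet p.2 \ p.1.verts).ncard)
    (Set.toFinite _) ⟨(M₁, a₁), hM₁⟩
  obtain ⟨M, ⟨hM, hM₂M⟩, hmin⟩ := Set.exists_min_image
    {N : G.Subgraph | N.IsMaximumMatching ∧
      (G.neighborSet a \ M₂.verts).ncard ≤ (G.neighborSet a \ N.verts).ncard}
    (fun N => ∑ᶠ v ∈ N.vertsᶜ, G.dist v a) (Set.toFinite _) ⟨M₂, hM₂, le_rfl⟩
  have hAmax' (N : G.Subgraph) (hN : N.IsMaximumMatching) (b : V) :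
      (G.neighborSet b \ N.verts).ncard ≤ (G.neighborSet a \ M.verts).ncard :=
    (hAmax (N, b) hN).trans hM₂M
  have hA : 2 ≤ (G.neighborSet a \ M.verts).ncard := hA₁.trans (hAmax' M₁ hM₁ a₁)
  have hadj (u : V) (hu : u ∉ M.verts) : G.Adj a u :=
    hM.adj_of_notMem_of_extremal hconn hT hA hAmax'
      (fun N hN hle => hmin N ⟨hN, hM₂M.trans hle⟩) hu
  obtain ⟨u, hau, hu⟩ :=
    Set.nonempty_of_ncard_ne_zero (s := G.neighborSet a \ M.verts) (by omega)
  obtain ⟨a', haa', -⟩ := hM.1 (hM.mem_verts_of_adj hu hau)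
  exact ⟨M, a, a', hM, haa', hadj, fun v hv => hM.not_adj_partner hA haa' hv⟩

theorem deficiency_le_of_tgraph3_free [Fintype V] {s : ℕ} (hs : 3 ≤ s) (hconn : G.Connected)
    (hstar : ¬ Nonempty (_root_.starGraph s ↪g G)) (hT : ¬ Nonempty (Tgraph 3 ↪g G)) :
    deficiency G ≤ s - 2 := by
  by_contra! hdef
  obtain ⟨M₀, hM₀⟩ := exists_isMaximumMatching G
  obtain ⟨M, a, a', hM, haa', hadj, ha'⟩ :=
    exists_isMaximumMatching_forall_adj hconn hT hM₀ (by rw [← hM₀.deficiency_eq]; omega)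
  have ha'M : a' ∉ M.vertsᶜ := fun h => h haa'.snd_mem
  refine hstar (nonempty_starGraph_embedding (c := a) (I := insert a' M.vertsᶜ) ?_ ?_ ?_)
  · exact Set.pairwise_insert.mpr ⟨fun u hu v hv _ => hM.not_adj hu hv,
      fun u hu _ => ⟨ha' u hu, fun h => ha' u hu h.symm⟩⟩
  · exact Set.insert_subset (M.adj_sub haa') hadj
  · rw [Set.ncard_insert_of_notMem ha'M, ← hM.deficiency_eq]
    omega

end SimpleGraph

/-- Let `s ≥ 4`. Every connected `{K_{1,s}, T₃}`-free graph has deficiency at most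
`s − 2`, and every connected `{K_{1,s}, P₄}`-free graph has deficiency at most `s − 2`. -/
theorem deficiency_le_of_star_T3_or_P4_free (s : ℕ) (hs : 4 ≤ s) :
    (∀ (V : Type) [Fintype V] (G : SimpleGraph V), G.Connected →
      ¬ Nonempty (_root_.starGraph s ↪g G) → ¬ Nonempty (Tgraph 3 ↪g G) →
      deficiency G ≤ s - 2) ∧
    (∀ (V : Type) [Fintype V] (G : SimpleGraph V), G.Connected →
      ¬ Nonempty (_root_.starGraph s ↪g G) → ¬ Nonempty (pathGraph 4 ↪g G) →
      deficiency G ≤ s - 2) := by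
  refine ⟨fun V _ G hconn hstar hT => deficiency_le_of_tgraph3_free (by omega) hconn hstar hT,
    fun V _ G hconn hstar hP => deficiency_le_of_tgraph3_free (by omega) hconn hstar ?_⟩
  rintro ⟨e⟩
  obtain ⟨f⟩ := nonempty_pathGraph_embedding_tgraph 3
  exact hP ⟨e.comp f⟩
end

section
/- Let s ≥ 4 be an integer and let G be a connected graph containing no induced K_{1,s} and no induced B_i for any i ≥ 0. Then def(G) ≤ s − 2. -/
open SimpleGraph

/-!
Induction on the number of vertices. If `G - u - v` is connected for some edge `uv`, a maximum
matching of `G - u - v` together with `uv` gives `def G ≤ def (G - u - v)`. Otherwise, if some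
vertex `z` is adjacent to all others, every edge contains `z` (an edge avoiding `z` would leave a
graph connected through `z`), so `G` is an induced star with at most `s - 1` leaves.

In the remaining case every edge separates. Take `v` farthest from a root `r` and its
predecessor `u` on a geodesic. A vertex `k` cut off from `r` by `{u, v}` lies at maximal distance
and is adjacent to `u`; it has no other neighbour `m`, since then `G - k - m` would be connected
(everything at smaller distance reaches `r` along geodesics, the rest through `u`). Repeating
with `k` in place of `v` gives a vertex `u ≠ r` carrying two pendant vertices. Doing this twice
yields two such vertices, and a shortest path between them with the four pendant vertices is an
induced `Bᵢ`.
-/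

lemma SimpleGraph.Subgraph.IsMatching.sup_subgraphOfAdj_s6 {V : Type*} {G : SimpleGraph V}
    {M : G.Subgraph} (hM : M.IsMatching) {u v : V} (huv : G.Adj u v) (hu : u ∉ M.verts)
    (hv : v ∉ M.verts) : (M ⊔ G.subgraphOfAdj huv).IsMatching :=
  hM.sup (.subgraphOfAdj huv) <| by
    rw [hM.support_eq_verts, (IsMatching.subgraphOfAdj huv).support_eq_verts,
      subgraphOfAdj_verts, Set.disjoint_insert_right, Set.disjoint_singleton_right]
    exact ⟨hu, hv⟩

section Deficiency

variable {V : Type*} [Fintype V] {G : SimpleGraph V}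

lemma bddAbove_ncard_verts_isMatching (G : SimpleGraph V) :
    BddAbove {k : ℕ | ∃ M : G.Subgraph, M.IsMatching ∧ M.verts.ncard = k} := by
  refine ⟨Fintype.card V, ?_⟩
  rintro _ ⟨M, -, rfl⟩
  simpa using Set.ncard_le_card M.verts

lemma deficiency_le_of_isMatching {M : G.Subgraph} (hM : M.IsMatching) :
    deficiency G ≤ Fintype.card V - M.verts.ncard :=
  Nat.sub_le_sub_left (le_csSup (bddAbove_ncard_verts_isMatching G) ⟨M, hM, rfl⟩) _

lemma exists_isMatching_deficiency_eq (G : SimpleGraph V) :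
    ∃ M : G.Subgraph, M.IsMatching ∧ deficiency G = Fintype.card V - M.verts.ncard := by
  have hne : {k : ℕ | ∃ M : G.Subgraph, M.IsMatching ∧ M.verts.ncard = k}.Nonempty :=
    ⟨0, ⊥, fun _ h => h.elim, by simp⟩
  obtain ⟨M, hM, hsup⟩ := Nat.sSup_mem hne (bddAbove_ncard_verts_isMatching G)
  exact ⟨M, hM, by rw [deficiency, ← hsup]⟩

lemma deficiency_le_of_isMatching_of_adj {M : G.Subgraph} (hM : M.IsMatching) {u v : V}
    (huv : G.Adj u v) (hu : u ∉ M.verts) (hv : v ∉ M.verts) :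
    deficiency G ≤ Fintype.card V - (M.verts.ncard + 2) := by
  have hcard : (M ⊔ G.subgraphOfAdj huv).verts.ncard = M.verts.ncard + 2 := by
    rw [Subgraph.verts_sup, subgraphOfAdj_verts, Set.union_insert, Set.union_singleton,
      Set.ncard_insert_of_notMem (by simp [hu, huv.ne]), Set.ncard_insert_of_notMem hv]
  have := deficiency_le_of_isMatching (hM.sup_subgraphOfAdj_s6 huv hu hv)
  rwa [hcard] at this

lemma deficiency_le_deficiency_induce {u v : V} (huv : G.Adj u v)
    [Fintype ↥({u, v}ᶜ : Set V)] :
    deficiency G ≤ deficiency (G.induce ({u, v}ᶜ : Set V)) := by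
  obtain ⟨M, hM, hdef⟩ := exists_isMatching_deficiency_eq (G.induce ({u, v}ᶜ : Set V))
  let e : G.induce ({u, v}ᶜ : Set V) ↪g G := Embedding.induce _
  have hM' := hM.map e.toHom e.injective
  have hout : ∀ x ∈ ({u, v} : Set V), x ∉ (M.map e.toHom).verts := by
    rintro x hx ⟨⟨y, hy⟩, -, rfl⟩
    exact hy hx
  have hcardM : (M.map e.toHom).verts.ncard = M.verts.ncard :=
    Set.ncard_image_of_injective _ e.injective
  have hcard : Fintype.card ↥({u, v}ᶜ : Set V) = Fintype.card V - 2 := by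
    rw [← Nat.card_eq_fintype_card, ← Nat.card_eq_fintype_card, Nat.card_coe_set_eq,
      Set.ncard_compl, Set.ncard_pair huv.ne]
  have := deficiency_le_of_isMatching_of_adj hM' huv (hout u (by simp)) (hout v (by simp))
  rw [hdef, hcard, ← hcardM]
  omega

end Deficiency

section Star

variable {V : Type*} {G : SimpleGraph V}

lemma nonempty_starGraph_embedding_s6 {s : ℕ} {z : V} (f : Fin s ↪ V) (hz : ∀ i, G.Adj z (f i))
    (hf : ∀ i j, ¬ G.Adj (f i) (f j)) : Nonempty (_root_.starGraph s ↪g G) := by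
  have hz' : ∀ i, G.Adj (f i) z := fun i => (hz i).symm
  refine ⟨⟨⟨Sum.elim (fun _ => z) f, ?_⟩, ?_⟩⟩
  · exact Function.Injective.sumElim (fun _ _ _ => Subsingleton.elim _ _) f.injective
      fun _ i h => (hz i).ne h
  · rintro (_ | i) (_ | j) <;> simp [_root_.starGraph, hz, hz', hf]

lemma connected_induce_compl_of_forall_adj {z : V} (hz : ∀ x, x ≠ z → G.Adj z x) {S : Set V}
    (hzS : z ∉ S) : (G.induce Sᶜ).Connected := by
  rw [connected_iff_exists_forall_reachable]
  refine ⟨⟨z, hzS⟩, fun ⟨x, hx⟩ => ?_⟩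
  by_cases hxz : x = z
  · subst hxz; rfl
  · exact Adj.reachable (by simpa using hz x hxz)

variable [Fintype V] {s : ℕ} {z : V}

lemma card_le_of_starGraph_free (hz : ∀ x, x ≠ z → G.Adj z x)
    (hind : ∀ a b, a ≠ z → b ≠ z → ¬ G.Adj a b)
    (hstar : ¬ Nonempty (_root_.starGraph s ↪g G)) : Fintype.card V ≤ s := by
  classical
  by_contra! h
  have : Fintype.card (Fin s) ≤ Fintype.card {x // x ≠ z} := by
    rw [Fintype.card_fin, Fintype.card_subtype_compl, Fintype.card_subtype_eq]
    omega
  obtain ⟨f⟩ := Function.Embedding.nonempty_of_card_le this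
  exact hstar <| nonempty_starGraph_embedding_s6 (f.trans (Function.Embedding.subtype (· ≠ z)))
    (fun i => hz _ (f i).2) (fun i j => hind _ _ (f i).2 (f j).2)

lemma deficiency_le_of_starGraph_free (hs : 3 ≤ s) (hz : ∀ x, x ≠ z → G.Adj z x)
    (hind : ∀ a b, a ≠ z → b ≠ z → ¬ G.Adj a b)
    (hstar : ¬ Nonempty (_root_.starGraph s ↪g G)) : deficiency G ≤ s - 2 := by
  have hcard := card_le_of_starGraph_free hz hind hstar
  by_cases h : ∃ x, x ≠ z
  · obtain ⟨x, hx⟩ := h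
    have := deficiency_le_of_isMatching_of_adj (M := ⊥) (fun _ h => h.elim) (hz x hx)
      (by simp) (by simp)
    simp only [Subgraph.verts_bot, Set.ncard_empty, zero_add] at this
    omega
  · push Not at h
    have : Fintype.card V ≤ 1 := Fintype.card_le_one_iff.2 fun a b => (h a).trans (h b).symm
    have : deficiency G ≤ Fintype.card V := Nat.sub_le _ _
    omega

end Star

section Geodesic

variable {V : Type*} {G : SimpleGraph V}

namespace SimpleGraph.Walk

variable {a b : V} {p : G.Walk a b}

lemma dist_getVert_of_length_eq_dist (hp : p.length = G.dist a b) {i : ℕ}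
    (hi : i ≤ p.length) : G.dist a (p.getVert i) = i := by
  have h₁ := dist_le (p.take i)
  have h₂ := dist_le (p.drop i)
  have h₃ := (p.drop i).reachable.dist_triangle_right a
  rw [take_length] at h₁
  rw [drop_length] at h₂
  omega

lemma getVert_injOn_of_length_eq_dist (hp : p.length = G.dist a b) {i j : ℕ}
    (hi : i ≤ p.length) (hj : j ≤ p.length) (h : p.getVert i = p.getVert j) : i = j := by
  rw [← dist_getVert_of_length_eq_dist hp hi, h, dist_getVert_of_length_eq_dist hp hj]

lemma adj_getVert_iff_of_length_eq_dist (hp : p.length = G.dist a b) {i j : ℕ}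
    (hi : i ≤ p.length) (hj : j ≤ p.length) :
    G.Adj (p.getVert i) (p.getVert j) ↔ i + 1 = j ∨ j + 1 = i := by
  constructor
  · intro h
    have hne : i ≠ j := fun hij => h.ne (by rw [hij])
    have := h.diff_dist_adj (u := a)
    rw [dist_getVert_of_length_eq_dist hp hi, dist_getVert_of_length_eq_dist hp hj] at this
    omega
  · rintro (rfl | rfl)
    · exact p.adj_getVert_succ (by omega)
    · exact (p.adj_getVert_succ (by omega)).symm

end SimpleGraph.Walk

lemma SimpleGraph.Connected.exists_adj_dist_eq (hconn : G.Connected) {r x : V} {n : ℕ}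
    (h : G.dist r x = n + 1) : ∃ y, G.Adj y x ∧ G.dist r y = n := by
  obtain ⟨p, hp⟩ := hconn.exists_walk_length_eq_dist r x
  refine ⟨p.getVert n, ?_, p.dist_getVert_of_length_eq_dist hp (by omega)⟩
  simpa [p.getVert_of_length_le (show p.length ≤ n + 1 by omega)] using
    p.adj_getVert_succ (i := n) (by omega)

end Geodesic

section ReachableAvoiding

variable {V : Type*} {G : SimpleGraph V}

def ReachableAvoiding (G : SimpleGraph V) (S : Set V) (a b : V) : Prop :=
  ∃ p : G.Walk a b, ∀ x ∈ p.support, x ∉ S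

variable {S T : Set V} {a b c r x : V}

lemma ReachableAvoiding.concat (h : ReachableAvoiding G S a b) (hbc : G.Adj b c) (hc : c ∉ S) :
    ReachableAvoiding G S a c := by
  obtain ⟨p, hp⟩ := h
  refine ⟨p.concat hbc, fun y hy => ?_⟩
  rw [Walk.support_concat, List.mem_append, List.mem_singleton] at hy
  rcases hy with hy | rfl
  exacts [hp y hy, hc]

lemma ReachableAvoiding.mono (h : ReachableAvoiding G S a b) (hTS : T ⊆ S) :
    ReachableAvoiding G T a b :=
  let ⟨p, hp⟩ := h
  ⟨p, fun y hy hyT => hp y hy (hTS hyT)⟩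

lemma ReachableAvoiding.union_unreachable (h : ReachableAvoiding G S r x) :
    ReachableAvoiding G (S ∪ {t | ¬ ReachableAvoiding G S r t}) r x := by
  classical
  obtain ⟨p, hp⟩ := h
  refine ⟨p, fun y hy hyT => hyT.elim (hp y hy) fun hunr => hunr ?_⟩
  exact ⟨p.takeUntil y hy, fun z hz => hp z (p.support_takeUntil_subset_support hy hz)⟩

lemma reachableAvoiding_of_dist_le (hconn : G.Connected) (hx : x ∉ S)
    (h : ∀ z ∈ S, G.dist r x ≤ G.dist r z) : ReachableAvoiding G S r x := by
  obtain ⟨p, hp⟩ := hconn.exists_walk_length_eq_dist r x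
  refine ⟨p, fun y hy hyS => ?_⟩
  obtain ⟨i, rfl, hi⟩ := Walk.mem_support_iff_exists_getVert.1 hy
  have := h _ hyS
  rw [p.dist_getVert_of_length_eq_dist hp hi, ← hp] at this
  rw [show i = p.length by omega, Walk.getVert_length] at hyS
  exact hx hyS

lemma connected_induce_compl_of_reachableAvoiding (hr : r ∉ S)
    (h : ∀ x ∉ S, ReachableAvoiding G S r x) : (G.induce Sᶜ).Connected := by
  refine (connected_iff_exists_forall_reachable _).2 ⟨⟨r, hr⟩, fun ⟨x, hx⟩ => ?_⟩
  obtain ⟨p, hp⟩ := h x hx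
  exact ⟨p.induce Sᶜ hp⟩

end ReachableAvoiding

section Pendant

variable {V : Type*} {G : SimpleGraph V} {w u x a b : V}

lemma adj_iff_of_neighborSet_eq_singleton (h : G.neighborSet w = {u}) : G.Adj w x ↔ x = u := by
  rw [← mem_neighborSet, h, Set.mem_singleton_iff]

lemma ne_of_neighborSet_eq_singleton (h : G.neighborSet w = {u}) (hxa : G.Adj x a)
    (hxb : G.Adj x b) (hab : a ≠ b) : x ≠ w := by
  rintro rfl
  rw [adj_iff_of_neighborSet_eq_singleton h] at hxa hxb
  exact hab (hxa.trans hxb.symm)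

/-- Every vertex of such a geodesic has two distinct neighbours (the inner ones on the geodesic
itself), so it is not a pendant vertex. -/
lemma SimpleGraph.Walk.getVert_ne_of_neighborSet_eq_singleton {p : G.Walk a b}
    (hp : p.length = G.dist a b) (ha : ∃ x y, x ≠ y ∧ G.Adj a x ∧ G.Adj a y)
    (hb : ∃ x y, x ≠ y ∧ G.Adj b x ∧ G.Adj b y) (h : G.neighborSet w = {u}) {i : ℕ}
    (hi : i ≤ p.length) : p.getVert i ≠ w := by
  suffices ∃ x y, x ≠ y ∧ G.Adj (p.getVert i) x ∧ G.Adj (p.getVert i) y by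
    obtain ⟨x, y, hxy, hx, hy⟩ := this
    exact ne_of_neighborSet_eq_singleton h hx hy hxy
  rcases Nat.eq_zero_or_pos i with rfl | hi₀
  · simpa using ha
  rcases hi.lt_or_eq with hi' | rfl
  · have hne : p.getVert (i - 1) ≠ p.getVert (i + 1) := fun h => by
      have := p.getVert_injOn_of_length_eq_dist hp (by omega) hi' h
      omega
    exact ⟨_, _, hne, (p.adj_getVert_iff_of_length_eq_dist hp hi (by omega)).2 (by omega),
      (p.adj_getVert_iff_of_length_eq_dist hp hi (by omega)).2 (by omega)⟩
  · simpa using hb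

end Pendant

lemma exists_Bgraph_embedding {V : Type*} {G : SimpleGraph V} (hconn : G.Connected)
    {u₁ u₂ : V} (hu : u₁ ≠ u₂) {w₁ w₂ : Fin 2 → V} (hw₁ : Function.Injective w₁)
    (hw₂ : Function.Injective w₂) (h₁ : ∀ t, G.neighborSet (w₁ t) = {u₁})
    (h₂ : ∀ t, G.neighborSet (w₂ t) = {u₂}) : ∃ i, Nonempty (Bgraph i ↪g G) := by
  obtain ⟨p, hp⟩ := hconn.exists_walk_length_eq_dist u₁ u₂
  obtain ⟨n, hn⟩ : ∃ n, p.length = n + 1 :=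
    Nat.exists_eq_add_one.2 (hp ▸ hconn.pos_dist_of_ne hu)
  have hA₁ : ∀ t x, G.Adj (w₁ t) x ↔ x = u₁ := fun t _ => adj_iff_of_neighborSet_eq_singleton (h₁ t)
  have hA₂ : ∀ t x, G.Adj (w₂ t) x ↔ x = u₂ := fun t _ => adj_iff_of_neighborSet_eq_singleton (h₂ t)
  have hA₁' : ∀ t x, G.Adj x (w₁ t) ↔ x = u₁ := fun t x => G.adj_comm _ _ |>.trans (hA₁ t x)
  have hA₂' : ∀ t x, G.Adj x (w₂ t) ↔ x = u₂ := fun t x => G.adj_comm _ _ |>.trans (hA₂ t x)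
  have hqadj : ∀ i ≤ n + 1, ∀ j ≤ n + 1,
      G.Adj (p.getVert i) (p.getVert j) ↔ i + 1 = j ∨ j + 1 = i := fun i hi j hj =>
    p.adj_getVert_iff_of_length_eq_dist hp (by omega) (by omega)
  have hqinj : ∀ i ≤ n + 1, ∀ j ≤ n + 1, p.getVert i = p.getVert j → i = j := fun i hi j hj =>
    p.getVert_injOn_of_length_eq_dist hp (by omega) (by omega)
  have hq₀ : p.getVert 0 = u₁ := p.getVert_zero
  have hqL : p.getVert (n + 1) = u₂ := hn ▸ p.getVert_length
  have hu₁ : ∃ x y, x ≠ y ∧ G.Adj u₁ x ∧ G.Adj u₁ y :=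
    ⟨w₁ 0, w₁ 1, hw₁.ne (by decide), by simp [hA₁']⟩
  have hu₂ : ∃ x y, x ≠ y ∧ G.Adj u₂ x ∧ G.Adj u₂ y :=
    ⟨w₂ 0, w₂ 1, hw₂.ne (by decide), by simp [hA₂']⟩
  have hq₁ : ∀ i ≤ n + 1, ∀ t, p.getVert i ≠ w₁ t := fun i hi t =>
    p.getVert_ne_of_neighborSet_eq_singleton hp hu₁ hu₂ (h₁ t) (by omega)
  have hq₂ : ∀ i ≤ n + 1, ∀ t, p.getVert i ≠ w₂ t := fun i hi t =>
    p.getVert_ne_of_neighborSet_eq_singleton hp hu₁ hu₂ (h₂ t) (by omega)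
  have hw₁u₁ : ∀ t, w₁ t ≠ u₁ := fun t => ((hA₁ t u₁).2 rfl).ne
  have hw₂u₂ : ∀ t, w₂ t ≠ u₂ := fun t => ((hA₂ t u₂).2 rfl).ne
  have hw₁u₂ : ∀ t, w₁ t ≠ u₂ := fun t h => hq₁ (n + 1) le_rfl t (hqL.trans h.symm)
  have hw₂u₁ : ∀ t, w₂ t ≠ u₁ := fun t h => hq₂ 0 (by omega) t (hq₀.trans h.symm)
  have hw₂₁ : ∀ t t', w₂ t ≠ w₁ t' := fun t t' h =>
    hu (Set.singleton_injective ((h₁ t').symm.trans (h ▸ h₂ t)))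
  have hqu₁ : ∀ i ≤ n + 1, p.getVert i = u₁ ↔ i = 0 := fun i hi =>
    ⟨fun h => hqinj _ hi _ (by omega) (h.trans hq₀.symm), fun h => h ▸ hq₀⟩
  have hqu₂ : ∀ i ≤ n + 1, p.getVert i = u₂ ↔ i = n + 1 := fun i hi =>
    ⟨fun h => hqinj _ hi _ le_rfl (h.trans hqL.symm), fun h => h ▸ hqL⟩
  let f : (Fin (n + 2) ⊕ Fin 2) ⊕ Fin 2 → V :=
    Sum.elim (Sum.elim (fun i => p.getVert i) w₂) w₁
  have hf : Function.Injective f := by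
    refine .sumElim (.sumElim (fun i j h => Fin.ext (hqinj _ i.is_le _ j.is_le h)) hw₂
      fun i t => hq₂ i i.is_le t) hw₁ ?_
    rintro (i | t) t'
    exacts [hq₁ i i.is_le t', hw₂₁ t t']
  refine ⟨n, ⟨⟨f, hf⟩, ?_⟩⟩
  rintro ((i | t) | t) ((j | t') | t') <;>
    simp [f, Bgraph, Tgraph, isTEnd, hA₁, hA₂, hA₁', hA₂', hw₁u₁, hw₂u₂, hw₁u₂, hw₂u₁,
      hqu₁, hqu₂, Fin.is_le]
  rw [hqadj _ i.is_le _ j.is_le, Fin.ext_iff]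
  omega

section EdgeSeparated

variable {V : Type*} {G : SimpleGraph V} {r u y : V} {d : ℕ}

lemma dist_eq_and_adj_of_not_reachableAvoiding (hconn : G.Connected)
    (hecc : ∀ x, G.dist r x ≤ d) (hu : G.dist r u + 1 = d) (hy : G.dist r y = d) {x : V}
    (hx : x ∉ ({u, y} : Set V)) (hxr : ¬ ReachableAvoiding G {u, y} r x) :
    G.dist r x = d ∧ G.Adj u x := by
  have hdS : ∀ z ∈ ({u, y} : Set V), G.dist r u ≤ G.dist r z := by
    rintro z (rfl | rfl) <;> omega
  have hdx : G.dist r x = d := by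
    by_contra hne
    have : G.dist r x ≤ G.dist r u := by have := hecc x; omega
    exact hxr (reachableAvoiding_of_dist_le hconn hx fun z hz => this.trans (hdS z hz))
  obtain ⟨v, hvx, hv⟩ := hconn.exists_adj_dist_eq (r := r) (x := x) (n := G.dist r u) (by omega)
  refine ⟨hdx, ?_⟩
  by_contra hux
  have hvS : v ∉ ({u, y} : Set V) := by
    rintro (rfl | rfl)
    exacts [hux hvx, by omega]
  exact hxr ((reachableAvoiding_of_dist_le hconn hvS fun z hz => hv ▸ hdS z hz).concat hvx hx)

lemma eq_of_adj_of_not_reachableAvoiding (hconn : G.Connected)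
    (hsep : ∀ a b, G.Adj a b → ¬ (G.induce {a, b}ᶜ).Connected)
    (hecc : ∀ x, G.dist r x ≤ d) (hu : G.dist r u + 1 = d) (hy : G.dist r y = d)
    (huy : G.Adj u y) {k m : V} (hkS : k ∉ ({u, y} : Set V))
    (hk : ¬ ReachableAvoiding G {u, y} r k) (hkm : G.Adj k m) : m = u := by
  have hkd := (dist_eq_and_adj_of_not_reachableAvoiding hconn hecc hu hy hkS hk).1
  by_contra hmu
  have hm : m ∈ ({u, y} : Set V) ∪ {t | ¬ ReachableAvoiding G {u, y} r t} := by
    by_contra hm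
    simp only [Set.mem_union, not_or, Set.mem_ofPred_eq, not_not] at hm
    exact hk (hm.2.concat hkm.symm hkS)
  have hmd : G.dist r m = d := by
    by_cases hmS : m ∈ ({u, y} : Set V)
    · rcases hmS with rfl | rfl
      exacts [absurd rfl hmu, hy]
    · exact (dist_eq_and_adj_of_not_reachableAvoiding hconn hecc hu hy hmS
        (hm.resolve_left hmS)).1
  -- the edge `km` would not separate: everything reaches `r` avoiding `k` and `m`
  refine hsep k m hkm (connected_induce_compl_of_reachableAvoiding (r := r) ?_ fun x hx => ?_)
  · rintro (rfl | rfl) <;> rw [SimpleGraph.dist_self] at * <;> omega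
  have hu' : ReachableAvoiding G {k, m} r u :=
    reachableAvoiding_of_dist_le hconn (by rintro (rfl | rfl) <;> omega)
      (by rintro z (rfl | rfl) <;> omega)
  by_cases hxu : x = u
  · exact hxu ▸ hu'
  by_cases hxy : x = y
  · exact hu'.concat (hxy ▸ huy) hx
  have hxS : x ∉ ({u, y} : Set V) := by
    rintro (h | h)
    exacts [hxu h, hxy h]
  by_cases hxr : ReachableAvoiding G {u, y} r x
  · refine hxr.union_unreachable.mono ?_
    rintro z (rfl | rfl)
    exacts [Or.inr hk, hm]
  · exact hu'.concat (dist_eq_and_adj_of_not_reachableAvoiding hconn hecc hu hy hxS hxr).2 hx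

lemma exists_neighborSet_eq_singleton (hconn : G.Connected)
    (hsep : ∀ a b, G.Adj a b → ¬ (G.induce {a, b}ᶜ).Connected)
    (hecc : ∀ x, G.dist r x ≤ d) (hu : G.dist r u + 1 = d) (hy : G.dist r y = d)
    (hru : r ≠ u) (huy : G.Adj u y) :
    ∃ k, k ≠ y ∧ G.dist r k = d ∧ G.neighborSet k = {u} := by
  have hrS : r ∉ ({u, y} : Set V) := by
    rintro (rfl | rfl)
    exacts [hru rfl, by rw [SimpleGraph.dist_self] at hy; omega]
  obtain ⟨k, hkS, hk⟩ : ∃ k ∉ ({u, y} : Set V), ¬ ReachableAvoiding G {u, y} r k := by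
    by_contra! h
    exact hsep u y huy (connected_induce_compl_of_reachableAvoiding hrS h)
  obtain ⟨hkd, huk⟩ := dist_eq_and_adj_of_not_reachableAvoiding hconn hecc hu hy hkS hk
  refine ⟨k, fun h => hkS (Or.inr h), hkd, Set.ext fun m => ⟨fun hkm => ?_, ?_⟩⟩
  · exact eq_of_adj_of_not_reachableAvoiding hconn hsep hecc hu hy huy hkS hk hkm
  · rintro rfl
    exact huk.symm

end EdgeSeparated

lemma exists_two_neighborSet_eq_singleton {V : Type*} [Fintype V] {G : SimpleGraph V}
    (hconn : G.Connected) (hsep : ∀ a b, G.Adj a b → ¬ (G.induce {a, b}ᶜ).Connected)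
    (hdom : ∀ z, ∃ x, x ≠ z ∧ ¬ G.Adj z x) (r : V) :
    ∃ u, u ≠ r ∧ ∃ w : Fin 2 → V, Function.Injective w ∧ ∀ t, G.neighborSet (w t) = {u} := by
  obtain ⟨v, -, hv⟩ := Finset.exists_max_image Finset.univ (G.dist r) ⟨r, Finset.mem_univ r⟩
  have hecc : ∀ x, G.dist r x ≤ G.dist r v := fun x => hv x (Finset.mem_univ x)
  have hd : 2 ≤ G.dist r v := by
    obtain ⟨x, hxr, hx⟩ := hdom r
    have := hconn.one_lt_dist_of_ne_of_not_adj hxr.symm hx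
    have := hecc x
    omega
  obtain ⟨u, huv, hu⟩ := hconn.exists_adj_dist_eq (r := r) (x := v) (n := G.dist r v - 1) (by omega)
  have hru : r ≠ u := by
    rintro rfl
    rw [SimpleGraph.dist_self] at hu
    omega
  obtain ⟨k₁, -, hk₁d, hk₁⟩ :=
    exists_neighborSet_eq_singleton hconn hsep hecc (by omega) rfl hru huv
  obtain ⟨k₂, hk₂₁, -, hk₂⟩ := exists_neighborSet_eq_singleton hconn hsep hecc (by omega) hk₁d
    hru ((adj_iff_of_neighborSet_eq_singleton hk₁).2 rfl).symm
  refine ⟨u, hru.symm, ![k₁, k₂], fun i j h => ?_, fun t => ?_⟩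
  · fin_cases i <;> fin_cases j <;> simp_all [eq_comm]
  · fin_cases t <;> assumption

/-- Let `s ≥ 4` and let `G` be a connected graph with no induced `K_{1,s}` and no induced
`Bᵢ` for any `i ≥ 0`. Then `def(G) ≤ s − 2`. -/
theorem deficiency_le_of_star_B_free (s : ℕ) (hs : 4 ≤ s)
    (V : Type) [Fintype V] (G : SimpleGraph V) (hconn : G.Connected)
    (hstar : ¬ Nonempty (_root_.starGraph s ↪g G))
    (hB : ∀ i : ℕ, ¬ Nonempty (Bgraph i ↪g G)) :
    deficiency G ≤ s - 2 := by
  classical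
  induction hn : Fintype.card V using Nat.strong_induction_on generalizing V with
  | _ n ih =>
  by_cases hred : ∃ u v, G.Adj u v ∧ (G.induce {u, v}ᶜ).Connected
  · obtain ⟨u, v, huv, hconn'⟩ := hred
    have hlt : Fintype.card ↥({u, v}ᶜ : Set V) < n :=
      hn ▸ Fintype.card_subtype_lt (x := u) (by simp)
    exact (deficiency_le_deficiency_induce huv).trans <| ih _ hlt _ _ hconn'
      (fun ⟨e⟩ => hstar ⟨(Embedding.induce _).comp e⟩)
      (fun i ⟨e⟩ => hB i ⟨(Embedding.induce _).comp e⟩) rfl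
  push Not at hred
  by_cases hdom : ∃ z, ∀ x, x ≠ z → G.Adj z x
  · obtain ⟨z, hz⟩ := hdom
    refine deficiency_le_of_starGraph_free (by omega) hz (fun a b ha hb hab => ?_) hstar
    exact hred a b hab (connected_induce_compl_of_forall_adj hz (by rintro (h | h) <;> simp_all))
  push Not at hdom
  obtain ⟨u₁, -, w₁, hw₁, h₁⟩ :=
    exists_two_neighborSet_eq_singleton hconn hred hdom hconn.nonempty.some
  obtain ⟨u₂, hu, w₂, hw₂, h₂⟩ := exists_two_neighborSet_eq_singleton hconn hred hdom u₁
  obtain ⟨i, hi⟩ := exists_Bgraph_embedding hconn hu.symm hw₁ hw₂ h₁ h₂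
  exact absurd hi (hB i)
end

section
/- For all positive integers n and p, the deficiency of K̃_n^p equals n if n(p+1) is even, and equals n + 1 otherwise. -/
open SimpleGraph

/-! Every copy of `T p` has two leaves with a common neighbour, so a matching misses a vertex in
each copy; as a matching covers an even number of vertices, at most `n(p+1)`, or `n(p+1) - 1` when
this is odd, vertices are covered. For the converse, match the path of each copy, continued by one
leaf, consecutively from its end: this is perfect when `p` is odd. When `p` is even, first match the
ends of the copies `i` and `n - 1 - i` to each other; the rest of each path then has `p` vertices,
and only the middle copy, for odd `n`, loses its leaf. -/

namespace SimpleGraph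

variable {V : Type*} {G : SimpleGraph V}

lemma Subgraph.IsMatching.even_ncard [Finite V] {M : G.Subgraph} (hM : M.IsMatching) :
    Even M.verts.ncard := by
  have := Fintype.ofFinite M.verts
  rw [Set.ncard_eq_toFinset_card']
  exact hM.even_card

lemma Subgraph.IsMatching.notMem_or_notMem {M : G.Subgraph} (hM : M.IsMatching) {u v w : V}
    (huv : u ≠ v) (hu : ∀ x, G.Adj u x → x = w) (hv : ∀ x, G.Adj v x → x = w) :
    u ∉ M.verts ∨ v ∉ M.verts := by
  by_contra! ⟨hum, hvm⟩
  obtain ⟨u', hu', -⟩ := hM hum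
  obtain ⟨v', hv', -⟩ := hM hvm
  obtain rfl := hu u' (M.adj_sub hu')
  obtain rfl := hv _ (M.adj_sub hv')
  exact huv (hM.eq_of_adj_right hu' hv')

lemma exists_isMatching_verts_eq_of_involutive {S : Set V} {f : V → V}
    (hmem : ∀ v ∈ S, f v ∈ S) (hinv : ∀ v ∈ S, f (f v) = v) (hadj : ∀ v ∈ S, G.Adj v (f v)) :
    ∃ M : G.Subgraph, M.IsMatching ∧ M.verts = S := by
  refine ⟨⟨S, fun a b => (a ∈ S ∧ f a = b) ∨ (b ∈ S ∧ f b = a), ?_, ?_, ?_⟩, ?_, rfl⟩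
  · rintro a b (⟨ha, rfl⟩ | ⟨hb, rfl⟩)
    exacts [hadj a ha, (hadj b hb).symm]
  · rintro a b (⟨ha, rfl⟩ | ⟨hb, rfl⟩)
    exacts [ha, hmem b hb]
  · exact ⟨fun a b => Or.symm⟩
  · intro v hv
    refine ⟨f v, Or.inl ⟨hv, rfl⟩, ?_⟩
    rintro y (⟨-, rfl⟩ | ⟨hy, rfl⟩)
    exacts [rfl, (hinv y hy).symm]

lemma deficiency_eq_of_isMatching [Fintype V] {M₀ : G.Subgraph} {t : ℕ} (hM₀ : M₀.IsMatching)
    (ht : M₀.verts.ncard = t) (hle : ∀ M : G.Subgraph, M.IsMatching → M.verts.ncard ≤ t) :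
    deficiency G = Fintype.card V - t := by
  have hmax : IsGreatest {k : ℕ | ∃ M : G.Subgraph, M.IsMatching ∧ M.verts.ncard = k} t :=
    ⟨⟨M₀, hM₀, ht⟩, by rintro k ⟨M, hM, rfl⟩; exact hle M hM⟩
  rw [deficiency, hmax.csSup_eq]

end SimpleGraph

lemma Fin.card_filter_rev_eq_self (n : ℕ) :
    (Finset.univ.filter fun i : Fin n => i.rev = i).card = n % 2 := by
  have hfix (i : Fin n) : i.rev = i ↔ 2 * (i : ℕ) + 1 = n := by
    rw [Fin.ext_iff, Fin.val_rev]
    omega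
  rcases Nat.even_or_odd' n with ⟨k, rfl | rfl⟩
  · rw [Nat.mul_mod_right, Finset.card_eq_zero, Finset.filter_eq_empty_iff]
    simp only [Finset.mem_univ, hfix, forall_const]
    omega
  · rw [show (2 * k + 1) % 2 = 1 by omega, Finset.card_eq_one]
    refine ⟨⟨k, by omega⟩, Finset.ext fun i => ?_⟩
    simp only [Finset.mem_filter, Finset.mem_univ, true_and, hfix, Finset.mem_singleton,
      Fin.ext_iff]
    omega

namespace Tgraph

variable {p : ℕ}

/-- Vertices of `T p` listed along the path from its end (position `0`) to the leaf `inr 0`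
(position `p`); the other leaf `inr 1` also sits at position `p`. -/
def pos : Fin p ⊕ Fin 2 → ℕ
  | Sum.inl j => j
  | Sum.inr _ => p

def ofPos (p t : ℕ) : Fin p ⊕ Fin 2 := if h : t < p then Sum.inl ⟨t, h⟩ else Sum.inr 0

lemma pos_ofPos {t : ℕ} (ht : t ≤ p) : pos (ofPos p t) = t := by
  unfold ofPos
  split_ifs <;> simp [pos]; omega

lemma ofPos_pos {x : Fin p ⊕ Fin 2} (hx : x ≠ Sum.inr 1) : ofPos p (pos x) = x := by
  rcases x with j | l
  · simp [ofPos, pos]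
  · fin_cases l <;> simp_all [ofPos, pos]

lemma ofPos_val (j : Fin p) : ofPos p j = Sum.inl j := by
  simp [ofPos]

lemma ofPos_ne_inr_one {t : ℕ} : ofPos p t ≠ Sum.inr 1 := by
  unfold ofPos; split_ifs <;> simp

lemma pos_le (x : Fin p ⊕ Fin 2) : pos x ≤ p := by
  rcases x with j | l
  exacts [j.isLt.le, le_rfl]

lemma isTEnd_ofPos_zero (hp : 0 < p) : isTEnd (ofPos p 0) := by
  simp [ofPos, hp, isTEnd]

lemma adj_ofPos_succ {t : ℕ} (ht : t < p) : (Tgraph p).Adj (ofPos p t) (ofPos p (t + 1)) := by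
  unfold ofPos
  split_ifs <;> simp [Tgraph]; omega

lemma eq_ofPos_of_adj_inr {l : Fin 2} {y : Fin p ⊕ Fin 2} (h : (Tgraph p).Adj (Sum.inr l) y) :
    y = ofPos p (p - 1) := by
  rcases y with j | l'
  · simp only [Tgraph, fromRel_adj] at h
    rw [← h.2.resolve_left id, ofPos_val]
  · simp [Tgraph] at h

end Tgraph

namespace Ktilde

open Tgraph

variable {n p : ℕ}

lemma adj_of_tgraph_adj {i : Fin n} {x y : Fin p ⊕ Fin 2} (h : (Tgraph p).Adj x y) :
    (Ktilde n p).Adj (i, x) (i, y) := by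
  simp only [Ktilde, fromRel_adj, ne_eq, Prod.mk.injEq, true_and]
  exact ⟨h.ne, Or.inl (Or.inl h)⟩

lemma adj_of_isTEnd {i i' : Fin n} (h : i ≠ i') {x y : Fin p ⊕ Fin 2} (hx : isTEnd x)
    (hy : isTEnd y) : (Ktilde n p).Adj (i, x) (i', y) := by
  simp only [Ktilde, fromRel_adj, ne_eq, Prod.mk.injEq]
  exact ⟨fun h' => h h'.1, Or.inl (Or.inr ⟨h, hx, hy⟩)⟩

lemma eq_of_adj_inr {i : Fin n} {l : Fin 2} {w : Fin n × (Fin p ⊕ Fin 2)}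
    (h : (Ktilde n p).Adj (i, Sum.inr l) w) : w = (i, ofPos p (p - 1)) := by
  simp only [Ktilde, fromRel_adj, isTEnd, false_and, and_false, or_false] at h
  obtain ⟨-, ⟨rfl, h⟩ | ⟨rfl, h⟩⟩ := h
  · rw [← eq_ofPos_of_adj_inr h]
  · rw [← eq_ofPos_of_adj_inr h.symm]

/-- The two leaves of a copy of `T p` share their only neighbour, so a matching misses one of
them in every copy. -/
lemma ncard_verts_le {M : (Ktilde n p).Subgraph} (hM : M.IsMatching) :
    M.verts.ncard ≤ n * (p + 1) := by
  have hmiss : ∀ i : Fin n, ∃ l : Fin 2, (i, Sum.inr l) ∉ M.verts := by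
    intro i
    rcases hM.notMem_or_notMem (u := (i, Sum.inr 0)) (v := (i, Sum.inr 1)) (by simp)
      (fun _ => eq_of_adj_inr) (fun _ => eq_of_adj_inr) with h | h
    exacts [⟨0, h⟩, ⟨1, h⟩]
  choose l hl using hmiss
  have hinj : Function.Injective fun i => ((i, Sum.inr (l i)) : Fin n × (Fin p ⊕ Fin 2)) :=
    fun a b hab => congrArg Prod.fst hab
  have hmissed : n ≤ M.vertsᶜ.ncard := by
    simpa [Set.ncard_range_of_injective hinj] using
      Set.ncard_le_ncard (Set.range_subset_iff.2 hl : _ ⊆ M.vertsᶜ) (Set.toFinite _)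
  have htotal := Set.ncard_add_ncard_compl M.verts
  simp only [Nat.card_eq_fintype_card, Fintype.card_prod, Fintype.card_fin, Fintype.card_sum]
    at htotal
  linarith

/-- Along a path, pairs position `s` with `s + 1`, `s + 2` with `s + 3`, and so on. -/
def step (s t : ℕ) : ℕ := if (t + s) % 2 = 0 then t + 1 else t - 1

/-- The positions `t ∈ [s, p]` that `step s` pairs within `[s, p]`. -/
def Admissible (p s t : ℕ) : Prop := s ≤ 1 ∧ s ≤ t ∧ t ≤ p ∧ (t = p → (p + s) % 2 = 1)

section step

variable {p s t : ℕ}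

lemma admissible_step (hp : 0 < p) (h : Admissible p s t) : Admissible p s (step s t) := by
  unfold Admissible step at *
  split_ifs <;> omega

lemma step_step (h : Admissible p s t) : step s (step s t) = t := by
  unfold Admissible step at *
  split_ifs <;> omega

lemma step_eq_or (h : Admissible p s t) : step s t = t + 1 ∨ step s t + 1 = t := by
  unfold Admissible step at *
  split_ifs <;> omega

end step

def offset (σ : Fin n → Fin n) (i : Fin n) : ℕ := if σ i = i then 0 else 1

/-- The end of copy `i` is matched to the end of copy `σ i` when `σ i ≠ i`; the remaining
positions `offset σ i, …, p` of its path are matched consecutively. -/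
def partner (σ : Fin n → Fin n) (v : Fin n × (Fin p ⊕ Fin 2)) : Fin n × (Fin p ⊕ Fin 2) :=
  if pos v.2 = 0 ∧ σ v.1 ≠ v.1 then (σ v.1, v.2)
  else (v.1, ofPos p (step (offset σ v.1) (pos v.2)))

variable (p) in
def matched (σ : Fin n → Fin n) : Set (Fin n × (Fin p ⊕ Fin 2)) :=
  {v | v.2 ≠ Sum.inr 1 ∧ (pos v.2 = p → (p + offset σ v.1) % 2 = 1)}

variable {σ : Fin n → Fin n} {i : Fin n} {x : Fin p ⊕ Fin 2}

lemma offset_le_one (i : Fin n) : offset σ i ≤ 1 := by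
  unfold offset
  split_ifs <;> simp

lemma partner_of_cross (hc : pos x = 0 ∧ σ i ≠ i) : partner σ (i, x) = (σ i, x) :=
  if_pos hc

lemma partner_of_not_cross (hc : ¬(pos x = 0 ∧ σ i ≠ i)) :
    partner σ (i, x) = (i, ofPos p (step (offset σ i) (pos x))) :=
  if_neg hc

lemma admissible_of_mem_matched (hv : (i, x) ∈ matched p σ) (hc : ¬(pos x = 0 ∧ σ i ≠ i)) :
    Admissible p (offset σ i) (pos x) := by
  refine ⟨offset_le_one i, ?_, pos_le x, hv.2⟩
  by_cases h0 : pos x = 0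
  · have hfix : σ i = i := not_not.1 fun h => hc ⟨h0, h⟩
    simp [offset, hfix]
  · have := offset_le_one (σ := σ) i
    omega

lemma mem_matched_of_admissible {t : ℕ} (h : Admissible p (offset σ i) t) :
    (i, ofPos p t) ∈ matched p σ :=
  ⟨ofPos_ne_inr_one, by simpa only [pos_ofPos h.2.2.1] using h.2.2.2⟩

lemma not_cross_of_admissible {t : ℕ} (h : Admissible p (offset σ i) t) :
    ¬(pos (ofPos p t) = 0 ∧ σ i ≠ i) := by
  rintro ⟨h0, hσ⟩
  rw [pos_ofPos h.2.2.1] at h0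
  have := h.2.1
  simp [offset, hσ] at this
  omega

lemma partner_mem_matched (hp : 0 < p) (hv : (i, x) ∈ matched p σ) :
    partner σ (i, x) ∈ matched p σ := by
  by_cases hc : pos x = 0 ∧ σ i ≠ i
  · rw [partner_of_cross hc]
    exact ⟨hv.1, fun h => by simp only at h; omega⟩
  · rw [partner_of_not_cross hc]
    exact mem_matched_of_admissible (admissible_step hp (admissible_of_mem_matched hv hc))

lemma partner_partner (hp : 0 < p) (hσ : Function.Involutive σ) (hv : (i, x) ∈ matched p σ) :
    partner σ (partner σ (i, x)) = (i, x) := by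
  by_cases hc : pos x = 0 ∧ σ i ≠ i
  · have hc' : pos x = 0 ∧ σ (σ i) ≠ σ i := by rw [hσ i]; exact ⟨hc.1, hc.2.symm⟩
    rw [partner_of_cross hc, partner_of_cross hc', hσ i]
  · have h := admissible_of_mem_matched hv hc
    have h' := admissible_step hp h
    rw [partner_of_not_cross hc, partner_of_not_cross (not_cross_of_admissible h'),
      pos_ofPos h'.2.2.1, step_step h, ofPos_pos hv.1]

lemma adj_partner (hp : 0 < p) (hv : (i, x) ∈ matched p σ) :
    (Ktilde n p).Adj (i, x) (partner σ (i, x)) := by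
  have hx : ofPos p (pos x) = x := ofPos_pos hv.1
  by_cases hc : pos x = 0 ∧ σ i ≠ i
  · rw [partner_of_cross hc, ← hx, hc.1]
    exact adj_of_isTEnd hc.2.symm (isTEnd_ofPos_zero hp) (isTEnd_ofPos_zero hp)
  · have h := admissible_of_mem_matched hv hc
    rw [partner_of_not_cross hc]
    conv_lhs => rw [← hx]
    have hle := h.2.2.1
    have hle' := (admissible_step hp h).2.2.1
    rcases step_eq_or h with h' | h'
    · rw [h']
      exact adj_of_tgraph_adj (adj_ofPos_succ (by omega))
    · conv_lhs => rw [← h']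
      exact (adj_of_tgraph_adj (adj_ofPos_succ (by omega))).symm

lemma exists_isMatching_verts_eq_matched (hp : 0 < p) (hσ : Function.Involutive σ) :
    ∃ M : (Ktilde n p).Subgraph, M.IsMatching ∧ M.verts = matched p σ :=
  exists_isMatching_verts_eq_of_involutive (fun _ hv => partner_mem_matched hp hv)
    (fun _ hv => partner_partner hp hσ hv) (fun _ hv => adj_partner hp hv)

lemma ncard_matched : (matched p σ).ncard = ∑ i, (p + (p + offset σ i) % 2) := by
  classical
  rw [Set.ncard_eq_toFinset_card', matched, Set.toFinset_ofPred, Finset.card_filter,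
    Fintype.sum_prod_type]
  refine Finset.sum_congr rfl fun i _ => ?_
  have hlt (j : Fin p) : (j : ℕ) ≠ p := j.isLt.ne
  rw [Fintype.sum_sum_type]
  rcases Nat.mod_two_eq_zero_or_one (p + offset σ i) with h | h <;> simp [pos, hlt, h]

lemma sum_offset_rev : ∑ i : Fin n, offset Fin.rev i = n - n % 2 := by
  classical
  have hsplit := Finset.card_filter_add_card_filter_not (s := Finset.univ)
    (fun i : Fin n => i.rev = i)
  simp only [offset, Finset.sum_ite, Finset.sum_const_zero, Finset.sum_const, smul_eq_mul,
    mul_one, zero_add, Finset.card_univ, Fintype.card_fin, Fin.card_filter_rev_eq_self]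
    at hsplit ⊢
  omega

lemma exists_isMatching_ncard (hp : 0 < p) :
    ∃ M : (Ktilde n p).Subgraph, M.IsMatching ∧
      M.verts.ncard = if Even (n * (p + 1)) then n * (p + 1) else n * (p + 1) - 1 := by
  rcases Nat.even_or_odd p with hpe | hpo
  · obtain ⟨M, hM, hverts⟩ := exists_isMatching_verts_eq_matched (n := n) hp Fin.rev_involutive
    refine ⟨M, hM, ?_⟩
    have hodd : ∀ i : Fin n, (p + offset Fin.rev i) % 2 = offset Fin.rev i := fun i => by
      have := offset_le_one (σ := Fin.rev) i
      rw [Nat.even_iff] at hpe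
      omega
    have hev : Even (n * (p + 1)) ↔ n % 2 = 0 := by
      rw [Nat.even_mul, Nat.even_add_one, ← Nat.even_iff]
      simp [hpe]
    rw [hverts, ncard_matched]
    simp only [hodd, hev, Finset.sum_add_distrib, sum_offset_rev, Finset.sum_const,
      Finset.card_univ, Fintype.card_fin, smul_eq_mul]
    have : n * (p + 1) = n * p + n := by ring
    split_ifs <;> omega
  · obtain ⟨M, hM, hverts⟩ := exists_isMatching_verts_eq_matched (n := n) hp (σ := id) fun _ => rfl
    refine ⟨M, hM, ?_⟩
    rw [hverts, ncard_matched, if_pos (Nat.even_mul.2 (Or.inr hpo.add_one))]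
    simp [offset, Nat.odd_iff.1 hpo]

end Ktilde

theorem deficiency_Ktilde_general (n p : ℕ) (hp : 1 ≤ p) :
    deficiency (Ktilde n p) = if Even (n * (p + 1)) then n else n + 1 := by
  obtain ⟨M₀, hM₀, hM₀card⟩ := Ktilde.exists_isMatching_ncard (n := n) hp
  have hle (M : (Ktilde n p).Subgraph) (hM : M.IsMatching) :
      M.verts.ncard ≤ if Even (n * (p + 1)) then n * (p + 1) else n * (p + 1) - 1 := by
    have hcard := Ktilde.ncard_verts_le hM
    split_ifs with hev
    · exact hcard
    · have := hM.even_ncard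
      rw [Nat.even_iff] at hev this
      omega
  have hcardV : Fintype.card (Fin n × (Fin p ⊕ Fin 2)) = n * (p + 1) + n := by
    simp only [Fintype.card_prod, Fintype.card_fin, Fintype.card_sum]
    ring
  rw [deficiency_eq_of_isMatching hM₀ hM₀card hle, hcardV]
  split_ifs with hev
  · omega
  · have : n * (p + 1) ≠ 0 := fun h => hev (h ▸ Even.zero)
    omega

/-- For all positive integers `n` and `p`, the deficiency of `K̃ₙᵖ` equals `n` if
`n(p+1)` is even, and equals `n + 1` otherwise. -/
theorem deficiency_Ktilde (n p : ℕ) (hn : 1 ≤ n) (hp : 1 ≤ p) :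
    deficiency (Ktilde n p) = if Even (n * (p + 1)) then n else n + 1 :=
  deficiency_Ktilde_general n p hp
end

section
/- For every positive integer s and every odd positive integer t, the deficiency of H_{s,t}^1 equals s + 1. -/
open SimpleGraph

/-!
Deleting the `s` vertices `vᵢ` leaves `2s + 1` parts of odd order with no edges between them:
the `s + 1` paths `Qᵢ` and the `s` isolated vertices `wᵢ`. A matching that covers an odd part
must match one of its vertices into the deleted set, so every matching misses at least
`(2s + 1) - s = s + 1` vertices. Matching each `Qᵢ` along consecutive pairs, which leaves only
its last vertex free, together with the edges `vᵢwᵢ` attains this bound.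
-/

namespace SimpleGraph.Subgraph.IsMatching

variable {V : Type*} {G : SimpleGraph V} {M : G.Subgraph}

theorem exists_adj_notMem_of_odd_ncard [Finite V] (hM : M.IsMatching) {A : Set V}
    (hA : A ⊆ M.verts) (hodd : Odd A.ncard) : ∃ x ∈ A, ∃ y ∉ A, M.Adj x y := by
  by_contra! hclosed
  have hind : (M.induce A).IsMatching := by
    intro v hv
    obtain ⟨w, hvw, huniq⟩ := hM (hA hv)
    exact ⟨w, ⟨hv, of_not_not fun hw => hclosed v hv w hw hvw, hvw⟩, fun y hy => huniq y hy.2.2⟩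
  classical
  have := Fintype.ofFinite (M.induce A).verts
  have heven := hind.even_card
  simp only [induce_verts, ← Set.ncard_eq_toFinset_card'] at heven
  exact Nat.not_even_iff_odd.mpr hodd heven

/-- The easy half of the Tutte–Berge formula, with odd parts that need not be connected. -/
theorem card_le_ncard_compl_verts_add_ncard [Finite V] {ι : Type*} [Finite ι]
    (hM : M.IsMatching) (S : Set V) (P : ι → Set V)
    (hdisj : Pairwise fun i j => Disjoint (P i) (P j))
    (hodd : ∀ i, Odd (P i).ncard) (hclosed : ∀ i, ∀ x ∈ P i, ∀ y, G.Adj x y → y ∈ P i ∨ y ∈ S) :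
    Nat.card ι ≤ M.vertsᶜ.ncard + S.ncard := by
  have hwitness : ∀ i, ∃ z : ↥M.vertsᶜ ⊕ ↥S,
      z.elim (fun u => u.1 ∈ P i) (fun v => ∃ x ∈ P i, M.Adj x v) := by
    intro i
    by_cases hsub : P i ⊆ M.verts
    · obtain ⟨x, hx, y, hy, hxy⟩ := hM.exists_adj_notMem_of_odd_ncard hsub (hodd i)
      have hyS : y ∈ S := (hclosed i x hx y (M.adj_sub hxy)).resolve_left hy
      exact ⟨.inr ⟨y, hyS⟩, x, hx, hxy⟩
    · obtain ⟨x, hx, hxM⟩ := Set.not_subset.mp hsub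
      exact ⟨.inl ⟨x, hxM⟩, hx⟩
  choose f hf using hwitness
  have hinj : Function.Injective f := by
    intro i j hij
    have hi := hf i
    have hj := hf j
    rw [hij] at hi
    by_contra hne
    generalize f j = z at hi hj
    rcases z with u | v
    · exact Set.disjoint_left.mp (hdisj hne) hi hj
    · obtain ⟨x, hx, hxv⟩ := hi
      obtain ⟨x', hx', hx'v⟩ := hj
      rw [hM.eq_of_adj_right hxv hx'v] at hx
      exact Set.disjoint_left.mp (hdisj hne) hx hx'
  simpa only [Nat.card_sum, Nat.card_coe_set_eq] using Nat.card_le_card_of_injective f hinj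

end SimpleGraph.Subgraph.IsMatching

theorem deficiency_eq_ncard_compl_verts {V : Type*} [Fintype V] {G : SimpleGraph V}
    {M₀ : G.Subgraph} (hM₀ : M₀.IsMatching)
    (hmin : ∀ M : G.Subgraph, M.IsMatching → M₀.vertsᶜ.ncard ≤ M.vertsᶜ.ncard) :
    deficiency G = M₀.vertsᶜ.ncard := by
  have hcard (M : G.Subgraph) : M.verts.ncard + M.vertsᶜ.ncard = Fintype.card V := by
    rw [Set.ncard_add_ncard_compl, Nat.card_eq_fintype_card]
  have hmax : IsGreatest {k : ℕ | ∃ M : G.Subgraph, M.IsMatching ∧ M.verts.ncard = k}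
      M₀.verts.ncard := by
    refine ⟨⟨M₀, hM₀, rfl⟩, ?_⟩
    rintro _ ⟨M, hM, rfl⟩
    have := hmin M hM
    have := hcard M
    have := hcard M₀
    omega
  rw [deficiency, hmax.csSup_eq, ← hcard M₀, Nat.add_sub_cancel_left]

namespace H1graph

open SimpleGraph.Subgraph

variable {s t : ℕ}

def matchedPair : (Fin (s + 1) × Fin (t / 2)) ⊕ Fin s →
    ((Fin (s + 1) × Fin t) ⊕ (Fin s × Fin 2)) × ((Fin (s + 1) × Fin t) ⊕ (Fin s × Fin 2))
  | .inl (i, m) => (.inl (i, ⟨2 * m, by omega⟩), .inl (i, ⟨2 * m + 1, by omega⟩))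
  | .inr k => (.inr (k, 0), .inr (k, 1))

theorem adj_matchedPair (e : (Fin (s + 1) × Fin (t / 2)) ⊕ Fin s) :
    (H1graph s t).Adj (matchedPair e).1 (matchedPair e).2 := by
  rcases e with ⟨i, m⟩ | k <;> simp [matchedPair, H1graph]

def matching (s t : ℕ) : (H1graph s t).Subgraph :=
  ⨆ e, (H1graph s t).subgraphOfAdj (adj_matchedPair e)

theorem isMatching_matching : (matching s t).IsMatching := by
  refine IsMatching.iSup (fun e => .subgraphOfAdj _) ?_
  rintro (⟨i, m⟩ | k) (⟨i', m'⟩ | k') hne <;>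
    simp [matchedPair, Set.disjoint_left, Fin.ext_iff] at hne ⊢ <;> omega

theorem ncard_compl_verts_matching_le (ht : Odd t) : (matching s t).vertsᶜ.ncard ≤ s + 1 := by
  have hsub : (matching s t).vertsᶜ ⊆
      Set.range fun i => .inl (i, ⟨t - 1, by grind⟩) := by
    have ht2 := Nat.odd_iff.mp ht
    rintro (⟨i, j⟩ | ⟨k, l⟩) hx <;>
      rw [Set.mem_compl_iff, matching, verts_iSup, Set.mem_iUnion] at hx
    · refine ⟨i, ?_⟩
      by_contra hj
      simp only [Sum.inl.injEq, Prod.mk.injEq, true_and, Fin.ext_iff] at hj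
      refine hx ⟨.inl (i, ⟨j / 2, by omega⟩), ?_⟩
      simp only [subgraphOfAdj_verts, matchedPair, Set.mem_insert_iff, Set.mem_singleton_iff,
        Sum.inl.injEq, Prod.mk.injEq, true_and, Fin.ext_iff]
      omega
    · refine (hx ⟨.inr k, ?_⟩).elim
      simp only [subgraphOfAdj_verts, matchedPair, Set.mem_insert_iff, Set.mem_singleton_iff,
        Sum.inr.injEq, Prod.mk.injEq, true_and, Fin.ext_iff]
      omega
  calc _ ≤ _ := Set.ncard_le_ncard hsub
    _ = s + 1 := by
      rw [Set.ncard_range_of_injective fun i i' h => by simpa using h, Nat.card_eq_fintype_card,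
        Fintype.card_fin]

def oddPart : Fin (s + 1) ⊕ Fin s → Set ((Fin (s + 1) × Fin t) ⊕ (Fin s × Fin 2))
  | .inl i => Set.range fun j => .inl (i, j)
  | .inr k => {.inr (k, 1)}

theorem succ_le_ncard_compl_verts {M : (H1graph s t).Subgraph} (hM : M.IsMatching)
    (ht : Odd t) : s + 1 ≤ M.vertsᶜ.ncard := by
  have hbound := hM.card_le_ncard_compl_verts_add_ncard (Set.range fun k => .inr (k, 0)) oddPart
    ?disjoint ?odd ?closed
  · rw [Set.ncard_range_of_injective fun k k' h => by simpa using h] at hbound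
    simp only [Nat.card_eq_fintype_card, Fintype.card_sum, Fintype.card_fin] at hbound
    omega
  case disjoint =>
    rintro (i | k) (i' | k') hne <;> simp_all [oddPart, Set.disjoint_left, eq_comm]
  case odd =>
    rintro (i | k)
    · rwa [oddPart, Set.ncard_range_of_injective fun j j' h => by simpa using h,
        Nat.card_eq_fintype_card, Fintype.card_fin]
    · simp [oddPart]
  case closed =>
    rintro (i | k) x hx y hxy <;> [obtain ⟨j, rfl⟩ := hx; obtain rfl := hx] <;>
      rcases y with ⟨i', j'⟩ | ⟨k', l'⟩ <;> simp [H1graph, oddPart] at hxy ⊢ <;> grind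

end H1graph

theorem deficiency_H1_general (s t : ℕ) (ht : Odd t) :
    deficiency (H1graph s t) = s + 1 := by
  have hupper := H1graph.ncard_compl_verts_matching_le (s := s) ht
  rw [deficiency_eq_ncard_compl_verts H1graph.isMatching_matching
    fun M hM => hupper.trans (H1graph.succ_le_ncard_compl_verts hM ht)]
  exact hupper.antisymm (H1graph.succ_le_ncard_compl_verts H1graph.isMatching_matching ht)

/-- For every positive integer `s` and every odd (positive) integer `t`, the deficiency
of `H¹_{s,t}` equals `s + 1`. -/
theorem deficiency_H1 (s t : ℕ) (hs : 1 ≤ s) (ht : Odd t) :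
    deficiency (H1graph s t) = s + 1 :=
  deficiency_H1_general s t ht
end

section
/- For every positive integer s and every odd positive integer t, the deficiencies of H_{s,t}^3 and of H_{s,t}^4 both equal s + 1. -/
open SimpleGraph

/-!
Write `t = 2m + 1` and index the vertices of each path `Qᵢ` by the positions `0, …, 2m`. The
`(s+1)(m+1)` path vertices at even positions form a vertex cover of `H⁴_{s,t}`, hence of
`H³_{s,t}`: an edge of `H⁴` either joins consecutive positions of a path or meets an end of a
path, at position `0` or `2m`. Conversely `H³` has a matching saturating exactly this cover:
match the vertex at position `2k < 2m` with its successor, the last vertex of `Qᵢ` with `vᵢ`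
for `i ≤ s`, and the last vertex of `Q_{s+1}` with `y`. A matching and a vertex cover of the
same size are both optimal, so every graph between `H³` and `H⁴` has matching number
`(s+1)(m+1)` and deficiency `(s+1)(2m+1) + 2s + 2 - 2(s+1)(m+1) = s + 1`.
-/

namespace SimpleGraph

variable {V : Type*} {G : SimpleGraph V}

theorem Subgraph.IsMatching.ncard_verts_le_two_mul [Finite V] {M : G.Subgraph} {c : Set V}
    (hM : M.IsMatching) (hc : G.IsVertexCover c) : M.verts.ncard ≤ 2 * c.ncard := by
  classical
  have hout : (M.verts \ c).ncard ≤ c.ncard := by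
    have := Fintype.ofFinite V
    rw [Set.ncard_eq_toFinset_card', Set.ncard_eq_toFinset_card']
    refine Finset.card_le_card_of_forall_subsingleton M.Adj (fun a ha => ?_)
      (fun b _ a₁ h₁ a₂ h₂ => hM.eq_of_adj_right h₁.2 h₂.2)
    rw [Set.mem_toFinset] at ha
    obtain ⟨b, hab, -⟩ := hM ha.1
    exact ⟨b, Set.mem_toFinset.2 ((hc (M.adj_sub hab)).resolve_left ha.2), hab⟩
  have hin : (M.verts ∩ c).ncard ≤ c.ncard := Set.ncard_inter_le_ncard_right _ _
  rw [← Set.ncard_inter_add_ncard_sdiff_eq_ncard M.verts c]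
  omega

theorem Subgraph.IsMatching.exists_of_injective {ι : Type*} {e f : ι → V}
    (he : Function.Injective e) (hf : Function.Injective f)
    (hef : Disjoint (Set.range e) (Set.range f)) (hadj : ∀ i, G.Adj (e i) (f i)) :
    ∃ M : G.Subgraph, M.verts = Set.range e ∪ Set.range f ∧ M.IsMatching := by
  refine Subgraph.IsMatching.exists_of_disjoint_sets_of_equiv hef
    ((Equiv.ofInjective e he).symm.trans (Equiv.ofInjective f hf)) ?_
  rintro ⟨_, i, rfl⟩
  simpa [Equiv.apply_ofInjective_symm] using hadj i

end SimpleGraph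

open SimpleGraph

theorem deficiency_eq_of_isVertexCover {V ι : Type*} [Fintype V] [Fintype ι] {G : SimpleGraph V}
    {e f : ι → V} (he : Function.Injective e) (hf : Function.Injective f)
    (hef : Disjoint (Set.range e) (Set.range f)) (hadj : ∀ i, G.Adj (e i) (f i))
    (hcover : G.IsVertexCover (Set.range e)) :
    deficiency G = Fintype.card V - 2 * Fintype.card ι := by
  have hcard : (Set.range e).ncard = Fintype.card ι := by
    rw [Set.ncard_range_of_injective he, Nat.card_eq_fintype_card]
  obtain ⟨M, hMverts, hM⟩ := Subgraph.IsMatching.exists_of_injective he hf hef hadj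
  have hmax : IsGreatest {k : ℕ | ∃ M : G.Subgraph, M.IsMatching ∧ M.verts.ncard = k}
      (2 * Fintype.card ι) := by
    refine ⟨⟨M, hM, ?_⟩, ?_⟩
    · rw [hMverts, Set.ncard_union_eq hef, hcard, Set.ncard_range_of_injective hf,
        Nat.card_eq_fintype_card, two_mul]
    · rintro _ ⟨N, hN, rfl⟩
      exact hcard ▸ hN.ncard_verts_le_two_mul hcover
  rw [deficiency, hmax.csSup_eq]

theorem H3graph_le_H4graph (s t : ℕ) : H3graph s t ≤ H4graph s t := by
  intro a b h
  rw [H3graph, fromRel_adj] at h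
  rw [H4graph, fromRel_adj]
  refine ⟨h.1, ?_⟩
  rcases a with ⟨i, j⟩ | (⟨k, l⟩ | z) <;> rcases b with ⟨i', j'⟩ | (⟨k', l'⟩ | z')
  case inl.inl => exact h.2.imp Or.inl Or.inl
  all_goals exact h.2

abbrev HVertex (s t : ℕ) : Type := (Fin (s + 1) × Fin t) ⊕ ((Fin s × Fin 2) ⊕ Fin 2)

section EvenCover

variable (s m : ℕ)

def pathEvenVertex (p : Fin (s + 1) × Fin (m + 1)) : HVertex s (2 * m + 1) :=
  Sum.inl (p.1, ⟨2 * p.2, by omega⟩)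

def pathEvenMate (p : Fin (s + 1) × Fin (m + 1)) : HVertex s (2 * m + 1) :=
  Fin.lastCases (Fin.lastCases (Sum.inr (Sum.inr 1)) (fun i => Sum.inr (Sum.inl (i, 0))) p.1)
    (fun k => Sum.inl (p.1, ⟨2 * k + 1, by omega⟩)) p.2

theorem pathEvenVertex_injective : Function.Injective (pathEvenVertex s m) := by
  rintro ⟨i, k⟩ ⟨i', k'⟩ h
  simp only [pathEvenVertex, Sum.inl.injEq, Prod.mk.injEq, Fin.mk.injEq] at h
  simp only [Prod.mk.injEq, Fin.ext_iff]
  omega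

theorem pathEvenMate_injective : Function.Injective (pathEvenMate s m) := by
  rintro ⟨i, k⟩ ⟨i', k'⟩ h
  induction k using Fin.lastCases <;> induction k' using Fin.lastCases <;>
    induction i using Fin.lastCases <;> induction i' using Fin.lastCases <;>
    simp_all [pathEvenMate, Fin.ext_iff]

theorem disjoint_range_pathEvenVertex_pathEvenMate :
    Disjoint (Set.range (pathEvenVertex s m)) (Set.range (pathEvenMate s m)) := by
  rw [Set.disjoint_range_iff]
  rintro ⟨i, k⟩ ⟨i', k'⟩
  induction k' using Fin.lastCases <;> induction i' using Fin.lastCases <;>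
    simp [pathEvenVertex, pathEvenMate, Fin.ext_iff] <;> omega

theorem H3graph_adj_pathEvenVertex_pathEvenMate (p : Fin (s + 1) × Fin (m + 1)) :
    (H3graph s (2 * m + 1)).Adj (pathEvenVertex s m p) (pathEvenMate s m p) := by
  obtain ⟨i, k⟩ := p
  rw [H3graph, fromRel_adj]
  induction k using Fin.lastCases <;> induction i using Fin.lastCases <;>
    simp [pathEvenVertex, pathEvenMate]

theorem mem_range_pathEvenVertex {v : HVertex s (2 * m + 1)} :
    v ∈ Set.range (pathEvenVertex s m) ↔ ∃ i j, v = Sum.inl (i, j) ∧ Even (j : ℕ) := by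
  constructor
  · rintro ⟨⟨i, k⟩, rfl⟩
    exact ⟨i, _, rfl, even_two_mul _⟩
  · rintro ⟨i, j, rfl, r, hr⟩
    exact ⟨(i, ⟨r, by omega⟩), by simp [pathEvenVertex, Fin.ext_iff]; omega⟩

theorem isVertexCover_H4graph_range_pathEvenVertex :
    (H4graph s (2 * m + 1)).IsVertexCover (Set.range (pathEvenVertex s m)) := by
  intro a b h
  rw [H4graph, fromRel_adj] at h
  simp only [mem_range_pathEvenVertex, Nat.even_iff]
  -- `-Fin.val_eq_zero_iff` keeps `↑j = 0` in `ℕ`, visible to `omega`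
  rcases a with ⟨i, j⟩ | (⟨k, l⟩ | z) <;>
    rcases b with ⟨i', j'⟩ | (⟨k', l'⟩ | z') <;>
    simp [-Fin.val_eq_zero_iff] at h ⊢ <;> omega

end EvenCover

theorem deficiency_eq_of_H3graph_le_of_le_H4graph (s m : ℕ)
    {G : SimpleGraph (HVertex s (2 * m + 1))}
    (h3 : H3graph s (2 * m + 1) ≤ G) (h4 : G ≤ H4graph s (2 * m + 1)) :
    deficiency G = s + 1 := by
  rw [deficiency_eq_of_isVertexCover (pathEvenVertex_injective s m)
    (pathEvenMate_injective s m) (disjoint_range_pathEvenVertex_pathEvenMate s m)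
    (fun p => h3 (H3graph_adj_pathEvenVertex_pathEvenMate s m p))
    ((isVertexCover_H4graph_range_pathEvenVertex s m).mono h4)]
  simp only [Fintype.card_sum, Fintype.card_prod, Fintype.card_fin]
  have hcard : (s + 1) * (2 * m + 1) + (s * 2 + 2) = s + 1 + 2 * ((s + 1) * (m + 1)) := by ring
  omega

theorem deficiency_H3_H4_general (s t : ℕ) (ht : Odd t) :
    deficiency (H3graph s t) = s + 1 ∧ deficiency (H4graph s t) = s + 1 := by
  obtain ⟨m, rfl⟩ := ht
  exact ⟨deficiency_eq_of_H3graph_le_of_le_H4graph s m le_rfl (H3graph_le_H4graph _ _),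
    deficiency_eq_of_H3graph_le_of_le_H4graph s m (H3graph_le_H4graph _ _) le_rfl⟩

/-- For every positive integer `s` and every odd (positive) integer `t`, the deficiencies
of `H³_{s,t}` and of `H⁴_{s,t}` both equal `s + 1`. -/
theorem deficiency_H3_H4 (s t : ℕ) (hs : 1 ≤ s) (ht : Odd t) :
    deficiency (H3graph s t) = s + 1 ∧ deficiency (H4graph s t) = s + 1 :=
  deficiency_H3_H4_general s t ht
end

section
/- For all positive integers n and p, there exists a bipartite graph G with vertex partition sets X and Y such that every vertex of X has degree at least 1, every vertex of Y has degree at most n, |X| = n(p − 1), and the induced matching number of G is exactly p − 1. Hence the bound |X| ≥ n(p − 1) + 1 in the induced matching lemma is tight. -/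
open SimpleGraph

/-!
Take `p - 1` disjoint copies of the star `K_{1,n}`, with `X` the leaves and `Y` the centres.
The centres form a vertex cover, and a matching has at most one edge at each vertex of a vertex
cover, so `ν' ≤ p - 1`; one edge from every star is an induced matching of size `p - 1`.
-/

namespace SimpleGraph.Subgraph

variable {V : Type*} {G : SimpleGraph V} {M : G.Subgraph}

section Finite

variable [Finite V]

lemma IsMatching.ncard_neighborSet_le_one (hM : M.IsMatching) (v : V) :
    (M.neighborSet v).ncard ≤ 1 :=
  Set.ncard_le_one_iff_subsingleton.2 fun _ hu _ hw ↦ hM.eq_of_adj_left hu hw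

/-- Every vertex of `M` lies in `c` or is the `M`-partner of a vertex of `c`. -/
lemma IsMatching.ncard_verts_le_two_mul_ncard (hM : M.IsMatching) {c : Set V}
    (hc : G.IsVertexCover c) : M.verts.ncard ≤ 2 * c.ncard := by
  classical
  have := Fintype.ofFinite V
  have hcover : M.verts ⊆ c ∪ ⋃ y ∈ c.toFinset, M.neighborSet y := by
    intro v hv
    obtain ⟨w, hvw, -⟩ := hM hv
    rcases hc (M.adj_sub hvw) with hvc | hwc
    · exact Or.inl hvc
    · exact Or.inr (Set.mem_biUnion (Set.mem_toFinset.2 hwc) hvw.symm)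
  calc M.verts.ncard
      ≤ c.ncard + (⋃ y ∈ c.toFinset, M.neighborSet y).ncard :=
        (Set.ncard_le_ncard hcover).trans (Set.ncard_union_le _ _)
    _ ≤ c.ncard + ∑ y ∈ c.toFinset, (M.neighborSet y).ncard := by
        gcongr; exact c.toFinset.set_ncard_biUnion_le _
    _ ≤ c.ncard + c.toFinset.card * 1 := by
        gcongr; exact Finset.sum_le_card_nsmul _ _ _ fun y _ ↦ hM.ncard_neighborSet_le_one y
    _ = 2 * c.ncard := by rw [Set.ncard_eq_toFinset_card']; ring

end Finite

lemma isMatching_induce_top {s : Set V} (h : ∀ v ∈ s, ∃! w, w ∈ s ∧ G.Adj v w) :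
    ((⊤ : G.Subgraph).induce s).IsMatching := by
  intro v hv
  obtain ⟨w, hw, huniq⟩ := h v hv
  exact ⟨w, ⟨hv, hw.1, hw.2⟩, fun u ⟨_, hu, hvu⟩ ↦ huniq u ⟨hu, hvu⟩⟩

end SimpleGraph.Subgraph

section IndMatchNum

variable {V : Type*} [Fintype V] {G : SimpleGraph V}

lemma le_indMatchNum {M : G.Subgraph} (hind : M.IsInduced) (hM : M.IsMatching) {k : ℕ}
    (hk : M.verts.ncard = 2 * k) : k ≤ indMatchNum G := by
  refine le_csSup ⟨Fintype.card V, ?_⟩ ⟨M, hind, hM, hk⟩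
  rintro j ⟨N, -, -, hj⟩
  have := Set.ncard_le_card N.verts
  rw [Nat.card_eq_fintype_card] at this
  omega

lemma indMatchNum_le_ncard_of_isVertexCover {c : Set V} (hc : G.IsVertexCover c) :
    indMatchNum G ≤ c.ncard := by
  refine csSup_le' ?_
  rintro k ⟨M, -, hM, hk⟩
  have := hM.ncard_verts_le_two_mul_ncard hc
  omega

end IndMatchNum

/-- `q` disjoint copies of the star `K_{1,n}`; the centre of the `i`-th star is `(i, Sum.inl ())`. -/
def starForest (q n : ℕ) : SimpleGraph (Fin q × (Unit ⊕ Fin n)) :=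
  (⊥ : SimpleGraph (Fin q)) □ completeBipartiteGraph Unit (Fin n)

section StarForest

variable {q n : ℕ}

lemma starForest_adj {a b : Fin q × (Unit ⊕ Fin n)} :
    (starForest q n).Adj a b ↔ a.1 = b.1 ∧ (completeBipartiteGraph Unit (Fin n)).Adj a.2 b.2 := by
  simp [starForest, boxProd_adj, and_comm]

lemma ncard_neighborSet_starForest_inl (i : Fin q) (u : Unit) :
    ((starForest q n).neighborSet (i, Sum.inl u)).ncard = n := by
  have : (starForest q n).neighborSet (i, Sum.inl u) = {i} ×ˢ Set.range Sum.inr := by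
    ext ⟨i', _ | _⟩ <;> simp [starForest_adj, eq_comm]
  simp [this, Set.ncard_prod, Set.ncard_range_of_injective Sum.inr_injective]

lemma ncard_neighborSet_starForest_inr (i : Fin q) (j : Fin n) :
    ((starForest q n).neighborSet (i, Sum.inr j)).ncard = 1 := by
  have : (starForest q n).neighborSet (i, Sum.inr j) = {(i, Sum.inl ())} := by
    ext ⟨i', _ | _⟩ <;> simp [starForest_adj, eq_comm]
  simp [this]

lemma isVertexCover_starForest_centres :
    (starForest q n).IsVertexCover (Set.univ ×ˢ Set.range Sum.inl) := by
  rintro ⟨i, _ | _⟩ ⟨i', _ | _⟩ h <;> simp_all [starForest_adj]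

lemma isMatching_starForest_induce (hn : 1 ≤ n) :
    ((⊤ : (starForest q n).Subgraph).induce
      (Set.univ ×ˢ {Sum.inl (), Sum.inr ⟨0, hn⟩})).IsMatching := by
  refine Subgraph.isMatching_induce_top ?_
  rintro ⟨i, x⟩ ⟨-, rfl | rfl⟩
  · refine ⟨(i, Sum.inr ⟨0, hn⟩), by simp [starForest_adj], ?_⟩
    rintro ⟨i', _ | _⟩ ⟨⟨-, hy⟩, hadj⟩ <;> simp_all [starForest_adj]
  · refine ⟨(i, Sum.inl ()), by simp [starForest_adj], ?_⟩
    rintro ⟨i', _ | _⟩ ⟨⟨-, hy⟩, hadj⟩ <;> simp_all [starForest_adj]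

lemma indMatchNum_starForest (hn : 1 ≤ n) : indMatchNum (starForest q n) = q := by
  refine le_antisymm ?_ ?_
  · simpa [Set.ncard_prod, Set.ncard_range_of_injective Sum.inl_injective] using
      indMatchNum_le_ncard_of_isVertexCover (isVertexCover_starForest_centres (q := q) (n := n))
  · refine le_indMatchNum (Subgraph.isInduced_iff_exists_eq_induce_top _ |>.2 ⟨_, rfl⟩)
      (isMatching_starForest_induce hn) ?_
    simp [Set.ncard_prod, Set.ncard_pair (Sum.inl_ne_inr : (Sum.inl () : Unit ⊕ Fin n) ≠ _),
      mul_comm]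

end StarForest

theorem induced_matching_bound_tight_general (n p : ℕ) (hn : 1 ≤ n) :
    ∃ (V : Type) (_ : Fintype V) (G : SimpleGraph V) (X Y : Set V),
      Disjoint X Y ∧ X ∪ Y = Set.univ ∧
      (∀ u v : V, G.Adj u v → (u ∈ X ∧ v ∈ Y) ∨ (u ∈ Y ∧ v ∈ X)) ∧
      (∀ x ∈ X, 1 ≤ (G.neighborSet x).ncard) ∧
      (∀ y ∈ Y, (G.neighborSet y).ncard ≤ n) ∧
      X.ncard = n * (p - 1) ∧
      indMatchNum G = p - 1 := by
  refine ⟨_, inferInstance, starForest (p - 1) n, Set.univ ×ˢ Set.range Sum.inr,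
    Set.univ ×ˢ Set.range Sum.inl, ?_, ?_, ?_, ?_, ?_, ?_, indMatchNum_starForest hn⟩
  · exact Set.disjoint_prod.2 (Or.inr Set.isCompl_range_inl_range_inr.disjoint.symm)
  · rw [← Set.prod_union, Set.union_comm, Set.range_inl_union_range_inr, Set.univ_prod_univ]
  · rintro ⟨i, _ | _⟩ ⟨i', _ | _⟩ h <;> simp_all [starForest_adj]
  · rintro ⟨i, _⟩ ⟨-, j, rfl⟩
    exact (ncard_neighborSet_starForest_inr i j).ge
  · rintro ⟨i, _⟩ ⟨-, u, rfl⟩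
    exact (ncard_neighborSet_starForest_inl i u).le
  · simp [Set.ncard_prod, Set.ncard_range_of_injective Sum.inr_injective, mul_comm]

/-- The bound `|X| ≥ n(p − 1) + 1` in the induced matching lemma is tight: for all
positive integers `n` and `p` there is a bipartite graph `G` with parts `X` and `Y`,
every vertex of `X` of degree at least `1`, every vertex of `Y` of degree at most `n`,
`|X| = n(p − 1)`, whose induced matching number is exactly `p − 1`. -/
theorem induced_matching_bound_tight (n p : ℕ) (hn : 1 ≤ n) (hp : 1 ≤ p) :
    ∃ (V : Type) (_ : Fintype V) (G : SimpleGraph V) (X Y : Set V),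
      Disjoint X Y ∧ X ∪ Y = Set.univ ∧
      (∀ u v : V, G.Adj u v → (u ∈ X ∧ v ∈ Y) ∨ (u ∈ Y ∧ v ∈ X)) ∧
      (∀ x ∈ X, 1 ≤ (G.neighborSet x).ncard) ∧
      (∀ y ∈ Y, (G.neighborSet y).ncard ≤ n) ∧
      X.ncard = n * (p - 1) ∧
      indMatchNum G = p - 1 :=
  induced_matching_bound_tight_general n p hn
end
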